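/- arXiv:2512.17256 — 13 statements merged into one kernel-verified Lean document; each statement's English description precedes it below -/
import Mathlib

section
/- Let R be a finite commutative ring, let k ≥ 1, and let M be a k×k matrix over R. Then M is MDS if and only if for every nonzero row vector c ∈ R^k, the vector c · [M | I_k] ∈ R^{2k} (the vector–matrix product of c with the k×2k block matrix whose left block is M and right block is the identity matrix I_k) has Hamming weight at least k+1. -/
/-- A square matrix over a commutative ring is MDS if every square submatrix
(selected by injective row/column index maps) has unit determinant. -/
def IsMDS {R : Type*} [CommRing R] {k : ℕ} (M : Matrix (Fin k) (Fin k) R) : Prop :=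
  ∀ (r : ℕ), 1 ≤ r → ∀ (f g : Fin r → Fin k), Function.Injective f → Function.Injective g →
    IsUnit (Matrix.det (M.submatrix f g))

/-- The Hamming weight of a vector: the number of nonzero coordinates. -/
noncomputable def hammingWt {ι R : Type*} [Fintype ι] [Zero R] (v : ι → R) : ℕ :=
  letI := Classical.decEq R
  Finset.card (Finset.univ.filter fun i => v i ≠ 0)

lemma hammingWt_eq {ι R : Type*} [Fintype ι] [Zero R] [DecidableEq R] (v : ι → R) :
    hammingWt v = (Finset.univ.filter fun i => v i ≠ 0).card := by
  unfold hammingWt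
  exact congrArg Finset.card (Finset.filter_congr_decidable _ _ _)

lemma hammingWt_sumElim {ι κ R : Type*} [Fintype ι] [Fintype κ] [Zero R]
    (u : ι → R) (v : κ → R) :
    hammingWt (Sum.elim u v) = hammingWt u + hammingWt v := by
  classical
  rw [hammingWt_eq, hammingWt_eq, hammingWt_eq, ← Finset.card_toLeft_add_card_toRight]
  have h1 : (Finset.univ.filter fun i => Sum.elim u v i ≠ 0).toLeft
      = Finset.univ.filter fun i => u i ≠ 0 := by ext i; simp
  have h2 : (Finset.univ.filter fun i => Sum.elim u v i ≠ 0).toRight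
      = Finset.univ.filter fun i => v i ≠ 0 := by ext i; simp
  rw [h1, h2]

/-- Over a finite commutative ring, a square matrix with trivial left kernel
has unit determinant. -/
lemma isUnit_det_of_vecMul_eq_zero {R : Type*} [CommRing R] [Fintype R] {r : ℕ}
    (A : Matrix (Fin r) (Fin r) R)
    (h : ∀ x : Fin r → R, Matrix.vecMul x A = 0 → x = 0) :
    IsUnit A.det := by
  classical
  have hinj : Function.Injective (fun x : Fin r → R => Matrix.vecMul x A) := by
    intro x y hxy
    have hxy' : Matrix.vecMul x A = Matrix.vecMul y A := hxy
    have hsub : Matrix.vecMul (x - y) A = 0 := by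
      rw [Matrix.sub_vecMul, hxy', sub_self]
    exact sub_eq_zero.mp (h _ hsub)
  have hsurj : Function.Surjective (fun x : Fin r → R => Matrix.vecMul x A) :=
    Finite.injective_iff_surjective.mp hinj
  choose B hB using fun i => hsurj (Pi.single i 1)
  have hBA : Matrix.of B * A = 1 := by
    ext i j
    have := congrFun (hB i) j
    simp only [Matrix.vecMul, dotProduct] at this
    rw [Matrix.mul_apply]
    simp only [Matrix.of_apply]
    rw [this]
    simp [Pi.single_apply, Matrix.one_apply, eq_comm]
  have hdet : (Matrix.of B).det * A.det = 1 := by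
    rw [← Matrix.det_mul, hBA, Matrix.det_one]
  exact IsUnit.of_mul_eq_one _ (by rw [mul_comm]; exact hdet)

/-- A `k×k` matrix `M` over a finite commutative ring `R` is MDS iff for every
nonzero row vector `c ∈ R^k`, the vector `c · [M | I_k] ∈ R^{2k}` has Hamming
weight at least `k + 1`. -/
theorem mds_iff_weight {R : Type*} [CommRing R] [Fintype R] {k : ℕ} (hk : 1 ≤ k)
    (M : Matrix (Fin k) (Fin k) R) :
    IsMDS M ↔ ∀ c : Fin k → R, c ≠ 0 →
      k + 1 ≤ hammingWt
        (Matrix.vecMul c (Matrix.fromCols M (1 : Matrix (Fin k) (Fin k) R))) := by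
  classical
  constructor
  · -- MDS → weight bound
    intro hMDS c hc
    by_contra hlt
    push_neg at hlt
    rw [Matrix.vecMul_fromCols, Matrix.vecMul_one, hammingWt_sumElim,
      hammingWt_eq, hammingWt_eq] at hlt
    set S : Finset (Fin k) := Finset.univ.filter (fun i => c i ≠ 0) with hSdef
    have hs1 : 1 ≤ S.card := by
      rcases Function.ne_iff.mp hc with ⟨i, hi⟩
      exact Finset.card_pos.mpr ⟨i, by
        simp only [hSdef, Finset.mem_filter, Finset.mem_univ, true_and]; exact hi⟩
    set Z : Finset (Fin k) := Finset.univ.filter (fun j => Matrix.vecMul c M j = 0) with hZdef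
    have hcard : (Finset.univ.filter fun j => Matrix.vecMul c M j ≠ 0).card + Z.card = k := by
      have := Finset.card_filter_add_card_filter_not
        (s := (Finset.univ : Finset (Fin k))) (p := fun j => Matrix.vecMul c M j ≠ 0)
      simpa [hZdef, not_not] using this
    have hsZ : S.card ≤ Z.card := by omega
    obtain ⟨T, hTZ, hTcard⟩ := Finset.exists_subset_card_eq hsZ
    set s := S.card with hs
    have hScard : S.card = s := rfl
    set f := S.orderEmbOfFin hScard with hfdef
    set g := T.orderEmbOfFin hTcard with hgdef
    have hdet := hMDS s hs1 f g f.injective g.injective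
    set A := M.submatrix f g with hAdef
    set x : Fin s → R := fun i => c (f i) with hxdef
    have hx0 : x ≠ 0 := by
      intro hx
      have hmem := S.orderEmbOfFin_mem hScard ⟨0, hs1⟩
      have : c (f ⟨0, hs1⟩) ≠ 0 := (Finset.mem_filter.mp hmem).2
      exact this (congrFun hx ⟨0, hs1⟩)
    have hSimg : Finset.image f Finset.univ = S := by
      apply Finset.coe_injective
      rw [Finset.coe_image, Finset.coe_univ, Set.image_univ]
      exact S.range_orderEmbOfFin hScard
    have hxA : Matrix.vecMul x A = 0 := by
      ext j
      have hgj : Matrix.vecMul c M (g j) = 0 := by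
        have := hTZ (T.orderEmbOfFin_mem hTcard j)
        exact (Finset.mem_filter.mp this).2
      have hsum : Matrix.vecMul c M (g j) = ∑ i : Fin k, c i * M i (g j) := by
        simp [Matrix.vecMul, dotProduct]
      have h1 : ∑ i : Fin k, c i * M i (g j) = ∑ i ∈ S, c i * M i (g j) := by
        refine (Finset.sum_subset (Finset.subset_univ S) ?_).symm
        intro i _ hi
        have : c i = 0 := by
          by_contra hci
          exact hi (by simp [hSdef, hci])
        rw [this, zero_mul]
      have h2 : ∑ i ∈ S, c i * M i (g j) = ∑ i : Fin s, c (f i) * M (f i) (g j) := by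
        rw [← hSimg, Finset.sum_image (fun a _ b _ hab => f.injective hab)]
      have : Matrix.vecMul x A j = 0 := by
        calc Matrix.vecMul x A j = ∑ i : Fin s, c (f i) * M (f i) (g j) := by
              simp [Matrix.vecMul, dotProduct, hAdef, hxdef, Matrix.submatrix_apply]
          _ = Matrix.vecMul c M (g j) := by rw [hsum, h1, h2]
          _ = 0 := hgj
      simpa using this
    have hA : Invertible A := Matrix.invertibleOfIsUnitDet A hdet
    have : x = 0 := by
      calc x = Matrix.vecMul x (A * ⅟A) := by rw [mul_invOf_self, Matrix.vecMul_one]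
        _ = Matrix.vecMul (Matrix.vecMul x A) ⅟A := by rw [Matrix.vecMul_vecMul]
        _ = 0 := by rw [hxA, Matrix.zero_vecMul]
    exact hx0 this
  · -- weight bound → MDS
    intro hw r hr f g hf hg
    apply isUnit_det_of_vecMul_eq_zero
    intro x hxA
    by_contra hx0
    set c : Fin k → R := fun i => ∑ j : Fin r, if f j = i then x j else 0 with hcdef
    have hcf : ∀ j, c (f j) = x j := by
      intro j
      simp only [hcdef]
      rw [Finset.sum_eq_single j]
      · simp
      · intro b _ hb; simp [hf.ne hb]
      · intro hj; exact absurd (Finset.mem_univ j) hj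
    have hcne : c ≠ 0 := by
      rcases Function.ne_iff.mp hx0 with ⟨j, hj⟩
      intro hc
      exact hj (by rw [← hcf j, hc]; rfl)
    have hrk : r ≤ k := by
      have := Fintype.card_le_of_injective f hf
      simpa using this
    have hgM : ∀ j0 : Fin r, Matrix.vecMul c M (g j0) = 0 := by
      intro j0
      have h1 : Matrix.vecMul c M (g j0) = ∑ i : Fin k, c i * M i (g j0) := by
        simp [Matrix.vecMul, dotProduct]
      have h2 : ∑ i : Fin k, c i * M i (g j0)
          = ∑ j : Fin r, x j * M (f j) (g j0) := by
        simp only [hcdef, Finset.sum_mul]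
        rw [Finset.sum_comm]
        refine Finset.sum_congr rfl fun j _ => ?_
        rw [Finset.sum_eq_single (f j)]
        · simp
        · intro b _ hb; simp [Ne.symm hb]
        · intro hj; exact absurd (Finset.mem_univ (f j)) hj
      have h3 : ∑ j : Fin r, x j * M (f j) (g j0) = Matrix.vecMul x (M.submatrix f g) j0 := by
        simp [Matrix.vecMul, dotProduct, Matrix.submatrix_apply]
      rw [h1, h2, h3, hxA]
      rfl
    have hw' := hw c hcne
    rw [Matrix.vecMul_fromCols, Matrix.vecMul_one, hammingWt_sumElim,
      hammingWt_eq, hammingWt_eq] at hw'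
    have hwc : (Finset.univ.filter fun i => c i ≠ 0).card ≤ r := by
      have hsub : (Finset.univ.filter fun i => c i ≠ 0) ⊆ Finset.image f Finset.univ := by
        intro i hi
        have hci : c i ≠ 0 := (Finset.mem_filter.mp hi).2
        by_contra hmem
        apply hci
        simp only [hcdef]
        refine Finset.sum_eq_zero fun j _ => ?_
        have : f j ≠ i := fun h => hmem (Finset.mem_image.mpr ⟨j, Finset.mem_univ j, h⟩)
        simp [this]
      calc (Finset.univ.filter fun i => c i ≠ 0).card
          ≤ (Finset.image f Finset.univ).card := Finset.card_le_card hsub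
        _ ≤ Finset.univ.card := Finset.card_image_le
        _ = r := by simp
    have hwcM : (Finset.univ.filter fun j => Matrix.vecMul c M j ≠ 0).card ≤ k - r := by
      have hsub : (Finset.univ.filter fun j => Matrix.vecMul c M j ≠ 0)
          ⊆ (Finset.image g Finset.univ)ᶜ := by
        intro j hj
        have hcj : Matrix.vecMul c M j ≠ 0 := (Finset.mem_filter.mp hj).2
        rw [Finset.mem_compl]
        intro hmem
        rcases Finset.mem_image.mp hmem with ⟨j0, _, rfl⟩
        exact hcj (hgM j0)
      have hgcard : (Finset.image g Finset.univ).card = r := by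
        rw [Finset.card_image_of_injective _ hg]; simp
      calc (Finset.univ.filter fun j => Matrix.vecMul c M j ≠ 0).card
          ≤ (Finset.image g Finset.univ)ᶜ.card := Finset.card_le_card hsub
        _ = k - r := by rw [Finset.card_compl, hgcard]; simp
    omega
end

section
/- Let R be a nontrivial commutative ring, σ a ring automorphism of R, k ≥ 1, and g = (g_0,…,g_{k−1}) ∈ R^k. If g_0 is not a unit of R, then for every integer s ≥ 1 the matrix P_s(g) := C_g^{[s−1]} · C_g^{[s−2]} ⋯ C_g^{[1]} · C_g^{[0]} is not MDS. -/
/-- The companion matrix of `g = (g₀, …, g_{k-1})`: row `i` (for `i ≤ k-2`) is the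
standard basis vector `e_{i+1}`, and the last row is `(-g₀, …, -g_{k-1})`. -/
def compMat {R : Type*} [CommRing R] {k : ℕ} (g : Fin k → R) : Matrix (Fin k) (Fin k) R :=
  Matrix.of fun i j =>
    if (i : ℕ) = k - 1 then -g j else if (j : ℕ) = (i : ℕ) + 1 then 1 else 0

/-- `Pmat σ g t = C_g^{[t-1]} ⋯ C_g^{[1]} ⋅ C_g^{[0]}`, where `C_g^{[i]}` is the
companion matrix of `g` with `σ^i` applied entrywise; `Pmat σ g 0 = 1`. -/
def Pmat {R : Type*} [CommRing R] {k : ℕ} (σ : RingAut R) (g : Fin k → R) :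
    ℕ → Matrix (Fin k) (Fin k) R
  | 0 => 1
  | t + 1 => ((compMat g).map (σ ^ t)) * Pmat σ g t

/-- The determinant of the companion matrix is `(-1)^n ⋅ (-g₀)`. -/
lemma compMat_det {R : Type*} [CommRing R] {n : ℕ} (g : Fin (n+1) → R) :
    (compMat g).det = (-1)^n * (- g 0) := by
  rw [Matrix.det_succ_column_zero, Fintype.sum_eq_single (Fin.last n)]
  · have h1 : (compMat g) (Fin.last n) 0 = - g 0 := by simp [compMat]
    have h2 : ((compMat g).submatrix (Fin.last n).succAbove Fin.succ) = 1 := by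
      ext i j
      have hi : ((Fin.last n).succAbove i : ℕ) = (i : ℕ) := by
        simp [Fin.succAbove_last]
      simp only [Matrix.submatrix_apply, compMat, Matrix.of_apply, hi, Fin.val_succ,
        Matrix.one_apply, Fin.ext_iff]
      have : (i : ℕ) < n := i.isLt
      rw [if_neg (by omega)]
      simp only [Nat.add_right_cancel_iff]
      rcases eq_or_ne (j : ℕ) (i : ℕ) with h | h
      · simp [h]
      · simp [h, Ne.symm h]
    rw [h1, h2, Matrix.det_one, mul_one, Fin.val_last]
  · intro i hi
    have h0 : (compMat g) i 0 = 0 := by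
      have : (i : ℕ) ≠ n := fun h => hi (Fin.ext (by simp [h]))
      simp [compMat, this]
    simp [h0]

/-- Over a nontrivial commutative ring, if `g₀` is not a unit, then
`P_s(g) = C_g^{[s-1]} ⋯ C_g^{[0]}` is not MDS for any `s ≥ 1`. -/
theorem not_mds_of_not_isUnit_const_coeff {R : Type*} [CommRing R] [Nontrivial R]
    (σ : RingAut R) {k : ℕ} (hk : 1 ≤ k) (g : Fin k → R)
    (hg : ¬ IsUnit (g ⟨0, hk⟩)) (s : ℕ) (hs : 1 ≤ s) :
    ¬ IsMDS (Pmat σ g s) := by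
  intro h
  have hdet := h k hk id id Function.injective_id Function.injective_id
  rw [Matrix.submatrix_id_id] at hdet
  -- a unit determinant of `Pmat σ g t` (for `t ≥ 1`) forces a unit determinant of `compMat g`
  have key : ∀ t, 1 ≤ t → IsUnit ((Pmat σ g t).det) → IsUnit ((compMat g).det) := by
    intro t
    induction t with
    | zero => intro h; omega
    | succ t ih =>
      intro _ hu
      rw [Pmat, Matrix.det_mul] at hu
      have h1 : IsUnit (((compMat g).map (σ ^ t)).det) := isUnit_of_mul_isUnit_left hu
      have h2 : ((compMat g).map (σ ^ t)).det = (σ ^ t) ((compMat g).det) := by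
        have := RingHom.map_det ((σ ^ t : RingAut R) : R →+* R) (compMat g)
        exact this.symm
      rw [h2] at h1
      have := h1.map (σ ^ t).symm.toRingHom
      have h3 : (σ ^ t).symm.toRingHom ((σ ^ t) ((compMat g).det)) = (compMat g).det :=
        (σ ^ t).symm_apply_apply _
      rwa [h3] at this
  have hC := key s hs hdet
  obtain ⟨n, rfl⟩ : ∃ n, k = n + 1 := ⟨k - 1, by omega⟩
  rw [compMat_det] at hC
  apply hg
  have h0 : (⟨0, hk⟩ : Fin (n+1)) = 0 := rfl
  rw [h0]
  have := (isUnit_of_mul_isUnit_right hC).neg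
  simpa using this
end

section
/- Let R be a commutative ring, σ a ring automorphism of R, k ≥ 1, and let g = (g_0,…,g_{k−1}) and h = (h_0,…,h_{k−1}) be vectors in R^k such that h_j − g_j is nilpotent for every 0 ≤ j ≤ k−1. Then for every t ≥ 1, if the matrix P_t(g) := C_g^{[t−1]} · C_g^{[t−2]} ⋯ C_g^{[1]} · C_g^{[0]} is MDS, then the matrix P_t(h) := C_h^{[t−1]} · C_h^{[t−2]} ⋯ C_h^{[1]} · C_h^{[0]} is also MDS. -/
/-- If `h_j - g_j` is nilpotent for all `j`, then for every `t ≥ 1`, if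
`P_t(g) = C_g^{[t-1]} ⋯ C_g^{[0]}` is MDS, so is `P_t(h)`. -/
theorem Pmat_mds_of_nilpotent_perturbation {R : Type*} [CommRing R] (σ : RingAut R)
    {k : ℕ} (hk : 1 ≤ k) (g h : Fin k → R) (hgh : ∀ j, IsNilpotent (h j - g j))
    (t : ℕ) (ht : 1 ≤ t) (hmds : IsMDS (Pmat σ g t)) :
    IsMDS (Pmat σ h t) := by
  classical
  set mk := Ideal.Quotient.mk (nilradical R) with hmk
  -- the companion matrices agree mod the nilradical, after applying σ^s
  have hcomp : ∀ s : ℕ, ((compMat h).map (σ ^ s)).map mk = ((compMat g).map (σ ^ s)).map mk := by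
    intro s
    ext i j
    simp only [Matrix.map_apply, compMat, Matrix.of_apply]
    split_ifs with h1
    · have : mk ((σ ^ s) (h j) - (σ ^ s) (g j)) = 0 := by
        rw [Ideal.Quotient.eq_zero_iff_mem, mem_nilradical, ← map_sub]
        exact (hgh j).map ((σ ^ s : RingAut R) : R →+* R)
      have h2 : mk ((σ ^ s) (h j)) = mk ((σ ^ s) (g j)) := by
        rwa [map_sub, sub_eq_zero] at this
      simp only [map_neg, h2]
    · rfl
    · rfl
  -- hence the products agree mod the nilradical
  have hP : ∀ s : ℕ, (Pmat σ h s).map mk = (Pmat σ g s).map mk := by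
    intro s
    induction s with
    | zero => rfl
    | succ n ih =>
      show (((compMat h).map (σ ^ n)) * Pmat σ h n).map mk
          = (((compMat g).map (σ ^ n)) * Pmat σ g n).map mk
      rw [Matrix.map_mul (f := mk), Matrix.map_mul (f := mk), hcomp n, ih]
  intro r hr f g' hf hg'
  have hdet : mk (((Pmat σ h t).submatrix f g').det) = mk (((Pmat σ g t).submatrix f g').det) := by
    rw [RingHom.map_det, RingHom.map_det]
    simp only [RingHom.mapMatrix_apply]
    rw [← Matrix.submatrix_map, ← Matrix.submatrix_map, hP t]
  have hnil : IsNilpotent (((Pmat σ h t).submatrix f g').det - ((Pmat σ g t).submatrix f g').det) := by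
    rw [← mem_nilradical, ← Ideal.Quotient.eq_zero_iff_mem, map_sub, hdet, sub_self]
  have hu := hmds r hr f g' hf hg'
  have := hnil.isUnit_add_right_of_commute hu (Commute.all _ _)
  simpa using this
end

section
/- Let R be a commutative ring, σ a ring automorphism of R, k ≥ 1, and let a = (a_0,…,a_{k−1}) and η = (η_0,…,η_{k−1}) be vectors in R^k with each η_j nilpotent. Let g = ∏_{j=0}^{k−1} (X − a_j) and h = ∏_{j=0}^{k−1} (X − (a_j + η_j)) in the (commutative) polynomial ring R[X]. Then: (a) for every index i, the coefficient of X^i in h − g is nilpotent; and consequently (b) for every t ≥ 1, if P_t(g₀,…,g_{k−1}) is MDS then P_t(h₀,…,h_{k−1}) is MDS, where (g₀,…,g_{k−1}) and (h₀,…,h_{k−1}) denote the vectors of coefficients of g and h in degrees 0 through k−1, and P_t(v) := C_v^{[t−1]} · C_v^{[t−2]} ⋯ C_v^{[1]} · C_v^{[0]}. -/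
open Polynomial

private lemma nilDiff_mul {R : Type*} [CommRing R] {k : ℕ}
    {A A' B B' : Matrix (Fin k) (Fin k) R}
    (hA : ∀ i j, A i j - A' i j ∈ nilradical R)
    (hB : ∀ i j, B i j - B' i j ∈ nilradical R) :
    ∀ i j, (A * B) i j - (A' * B') i j ∈ nilradical R := by
  intro i j
  simp only [Matrix.mul_apply, ← Finset.sum_sub_distrib]
  refine Ideal.sum_mem _ fun l _ => ?_
  have h : A i l * B l j - A' i l * B' l j
      = A i l * (B l j - B' l j) + (A i l - A' i l) * B' l j := by ring
  rw [h]
  exact Ideal.add_mem _ (Ideal.mul_mem_left _ _ (hB l j)) (Ideal.mul_mem_right _ _ (hA i l))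

open Polynomial in
/-- Let `g = ∏ (X - a_j)` and `h = ∏ (X - (a_j + η_j))` with each `η_j` nilpotent.
Then (a) every coefficient of `h - g` is nilpotent, and (b) for every `t ≥ 1`,
if `P_t` of the coefficient vector of `g` is MDS, so is `P_t` of that of `h`. -/
theorem mds_of_nilpotent_root_perturbation {R : Type*} [CommRing R] (σ : RingAut R)
    {k : ℕ} (hk : 1 ≤ k) (a η : Fin k → R) (hη : ∀ j, IsNilpotent (η j)) :
    let g : R[X] := ∏ j : Fin k, (X - C (a j))
    let h : R[X] := ∏ j : Fin k, (X - C (a j + η j))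
    (∀ i : ℕ, IsNilpotent ((h - g).coeff i)) ∧
    (∀ t : ℕ, 1 ≤ t →
      IsMDS (Pmat σ (fun j : Fin k => g.coeff (j : ℕ)) t) →
      IsMDS (Pmat σ (fun j : Fin k => h.coeff (j : ℕ)) t)) := by
  intro g h
  set φ := Ideal.Quotient.mk (nilradical R) with hφ
  have hmap : h.map φ = g.map φ := by
    simp only [g, h, Polynomial.map_prod, Polynomial.map_sub, Polynomial.map_X,
      Polynomial.map_C]
    refine Finset.prod_congr rfl fun j _ => ?_
    have : φ (η j) = 0 := Ideal.Quotient.eq_zero_iff_mem.mpr (mem_nilradical.mpr (hη j))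
    simp [map_add, this]
  have hcoeff : ∀ i : ℕ, (h - g).coeff i ∈ nilradical R := by
    intro i
    have : φ ((h - g).coeff i) = 0 := by
      rw [← Polynomial.coeff_map, Polynomial.map_sub, hmap, sub_self, Polynomial.coeff_zero]
    exact Ideal.Quotient.eq_zero_iff_mem.mp this
  refine ⟨fun i => mem_nilradical.mp (hcoeff i), ?_⟩
  set gv : Fin k → R := fun j : Fin k => g.coeff (j : ℕ) with hgv
  set hv : Fin k → R := fun j : Fin k => h.coeff (j : ℕ) with hhv
  have hcomp : ∀ t : ℕ, ∀ i j, ((compMat hv).map (σ ^ t)) i j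
      - ((compMat gv).map (σ ^ t)) i j ∈ nilradical R := by
    intro t i j
    have : ((compMat hv).map (σ ^ t)) i j - ((compMat gv).map (σ ^ t)) i j
        = (σ ^ t) (compMat hv i j - compMat gv i j) := by
      simp [Matrix.map_apply, map_sub]
    rw [this]
    have hd : compMat hv i j - compMat gv i j ∈ nilradical R := by
      simp only [compMat, Matrix.of_apply]
      by_cases hi : (i : ℕ) = k - 1
      · simp only [hi, if_true]
        have : -hv j - -gv j = -((h - g).coeff (j : ℕ)) := by
          simp [hgv, hhv, Polynomial.coeff_sub]; ring
        rw [this]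
        exact neg_mem (hcoeff _)
      · simp [hi]
    exact mem_nilradical.mpr (IsNilpotent.map (mem_nilradical.mp hd) (σ ^ t))
  have hP : ∀ t : ℕ, ∀ i j, Pmat σ hv t i j - Pmat σ gv t i j ∈ nilradical R := by
    intro t
    induction t with
    | zero => intro i j; simp [Pmat]
    | succ t ih =>
      intro i j
      exact nilDiff_mul (hcomp t) ih i j
  intro t ht hMDS r hr f fc hf hfc
  have hu := hMDS r hr f fc hf hfc
  have hdet : ((Pmat σ hv t).submatrix f fc).det
      - ((Pmat σ gv t).submatrix f fc).det ∈ nilradical R := by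
    have hmapeq : ((Pmat σ hv t).submatrix f fc).map φ
        = ((Pmat σ gv t).submatrix f fc).map φ := by
      ext i j
      simp only [Matrix.map_apply, Matrix.submatrix_apply]
      rw [← sub_eq_zero, ← map_sub]
      exact Ideal.Quotient.eq_zero_iff_mem.mpr (hP t (f i) (fc j))
    have : φ (((Pmat σ hv t).submatrix f fc).det - ((Pmat σ gv t).submatrix f fc).det) = 0 := by
      rw [map_sub, RingHom.map_det, RingHom.map_det, RingHom.mapMatrix_apply, RingHom.mapMatrix_apply, hmapeq, sub_self]
    exact Ideal.Quotient.eq_zero_iff_mem.mp this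
  have hn : IsNilpotent (((Pmat σ hv t).submatrix f fc).det
      - ((Pmat σ gv t).submatrix f fc).det) := mem_nilradical.mp hdet
  have heq : ((Pmat σ hv t).submatrix f fc).det
      = (((Pmat σ hv t).submatrix f fc).det - ((Pmat σ gv t).submatrix f fc).det)
        + ((Pmat σ gv t).submatrix f fc).det := by ring
  rw [heq]
  exact hn.isUnit_add_right_of_commute hu (Commute.all _ _)
end

section
/- Let R be a commutative ring, σ a ring automorphism of R, ξ a unit of R, and let k ≥ 1 and t ≥ k be integers with E = {0,1,…,k−1} ∪ {t,t+1,…,t+k−1}. Assume that for all distinct i, j ∈ E the element N^σ_i(ξ) − N^σ_j(ξ) is a unit of R. Fix an injective map e : {0,…,k−1} → E and set x_c := N^σ_{e(c)}(ξ) for 0 ≤ c ≤ k−1. Define exponents m_r = r for 0 ≤ r ≤ k−2 and m_{k−1} = k. Then the k×k matrix whose (r,c) entry is x_c^{m_r} has determinant a unit of R if and only if ∑_{c=0}^{k−1} x_c is a unit of R. -/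
def NsU {R : Type*} [CommRing R] (σ : RingAut R) (i : ℕ) (ξ : Rˣ) : Rˣ :=
  ∏ l ∈ Finset.range i, Units.map (σ ^ l).toRingHom.toMonoidHom ξ

open Polynomial Matrix in
/-- With `x_c := N^σ_{e c}(ξ)` and exponents `(0, 1, …, k-2, k)`, the matrix with
`(r,c)` entry `x_c^{m_r}` has unit determinant iff `∑ x_c` is a unit. -/
theorem det_unit_iff_sum_unit {R : Type*} [CommRing R] (σ : RingAut R) (ξ : Rˣ)
    {k t : ℕ} (hk : 1 ≤ k) (ht : k ≤ t)
    (hdiff : ∀ i ∈ Finset.range k ∪ Finset.Ico t (t + k),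
      ∀ j ∈ Finset.range k ∪ Finset.Ico t (t + k), i ≠ j →
        IsUnit ((NsU σ i ξ : R) - (NsU σ j ξ : R)))
    (e : Fin k → ℕ) (hinj : Function.Injective e)
    (he : ∀ c, e c ∈ Finset.range k ∪ Finset.Ico t (t + k)) :
    IsUnit (Matrix.det (Matrix.of fun r c : Fin k =>
        ((NsU σ (e c) ξ : R) ^ (if (r : ℕ) = k - 1 then k else (r : ℕ)))))
      ↔ IsUnit (∑ c : Fin k, (NsU σ (e c) ξ : R)) := by
  rcases subsingleton_or_nontrivial R with hR | hR
  · exact iff_of_true (isUnit_of_subsingleton _) (isUnit_of_subsingleton _)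
  set x : Fin k → R := fun c => (NsU σ (e c) ξ : R) with hx
  -- the Vandermonde determinant is a unit
  have hVunit : IsUnit ((Matrix.vandermonde x).det) := by
    rw [Matrix.det_vandermonde]
    refine Finset.prod_induction _ IsUnit (fun a b ha hb => ha.mul hb) isUnit_one ?_
    intro i _
    refine Finset.prod_induction _ IsUnit (fun a b ha hb => ha.mul hb) isUnit_one ?_
    intro j hj
    have hij : i ≠ j := fun h => by simp [h] at hj
    exact hdiff (e j) (he j) (e i) (he i) (fun h => hij (hinj h).symm)
  -- the polynomial ∏ (X - x c)
  set p : R[X] := ∏ c : Fin k, (X - C (x c)) with hp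
  have hmon : p.Monic := monic_prod_of_monic _ _ fun c _ => monic_X_sub_C _
  have hdeg : p.natDegree = k := by
    rw [hp, natDegree_prod_of_monic _ _ fun c _ => monic_X_sub_C _]
    simp [natDegree_X_sub_C, natDegree_X]
  have heval : ∀ c : Fin k, p.eval (x c) = 0 := fun c => by
    rw [hp, eval_prod]
    exact Finset.prod_eq_zero (Finset.mem_univ c) (by simp)
  -- last index
  have hk1 : k - 1 < k := Nat.sub_lt hk one_pos
  set last : Fin k := ⟨k - 1, hk1⟩ with hlast
  -- the matrix as an updateRow of the transposed Vandermonde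
  have hM : (Matrix.of fun r c : Fin k => x c ^ (if (r : ℕ) = k - 1 then k else (r : ℕ)))
      = ((Matrix.vandermonde x)ᵀ).updateRow last
        (∑ r : Fin k, (-(p.coeff (r : ℕ))) • (Matrix.vandermonde x)ᵀ r) := by
    ext r c
    by_cases hr : (r : ℕ) = k - 1
    · have hr' : r = last := Fin.ext hr
      subst hr'
      rw [Matrix.updateRow_self]
      have hck : p.coeff k = 1 := by rw [← hdeg]; exact hmon.coeff_natDegree
      have h0 := heval c
      rw [eval_eq_sum_range, hdeg, Finset.sum_range_succ, hck, one_mul] at h0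
      have key : x c ^ k = ∑ i ∈ Finset.range k, -(p.coeff i * x c ^ i) := by
        rw [Finset.sum_neg_distrib]; linear_combination h0
      show x c ^ (if ((last : ℕ) = k - 1) then k else (last : ℕ)) = _
      rw [if_pos hr, key, Finset.sum_apply,
        ← Fin.sum_univ_eq_sum_range (fun i => -(p.coeff i * x c ^ i)) k]
      exact Finset.sum_congr rfl fun r _ => by
        simp [Matrix.vandermonde_apply, neg_mul]
    · rw [Matrix.updateRow_ne (fun h => hr (by rw [h]))]
      simp [Matrix.vandermonde, hr]
  rw [hM, Matrix.det_updateRow_sum]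
  -- coefficient at last = -(p.coeff (k-1)) = ∑ x c
  have hcoeff : -(p.coeff (k - 1)) = ∑ c : Fin k, x c := by
    have := prod_X_sub_C_coeff_card_pred (Finset.univ : Finset (Fin k)) x
      (by simp [Finset.card_univ]; omega)
    simp only [Finset.card_univ, Fintype.card_fin] at this
    rw [hp, this, neg_neg]
  rw [smul_eq_mul, hcoeff, Matrix.det_transpose]
  obtain ⟨u, hu⟩ := hVunit
  rw [← hu, Units.isUnit_mul_units]
end

section
/- Let R be a commutative ring, σ a ring automorphism of R, ξ a unit of R, and let k ≥ 1 and t ≥ k be integers with E = {0,1,…,k−1} ∪ {t,t+1,…,t+k−1}. Assume that for all distinct i, j ∈ E the element N^σ_i(ξ) − N^σ_j(ξ) is a unit of R. Fix an injective map e : {0,…,k−1} → E and set x_c := N^σ_{e(c)}(ξ) for 0 ≤ c ≤ k−1 (each x_c is a unit). Define exponents m_0 = 0 and m_r = r+1 for 1 ≤ r ≤ k−1 (i.e., the exponent list is (0,2,3,…,k)). Then the k×k matrix whose (r,c) entry is x_c^{m_r} has determinant a unit of R if and only if ∑_{c=0}^{k−1} x_c^{−1} is a unit of R. -/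
open Finset Polynomial Matrix

lemma succAbove_one_val' {n : ℕ} (c : Fin (n+1)) :
    (((1 : Fin (n+2)).succAbove c : ℕ)) = if (c : ℕ) = 0 then 0 else (c : ℕ) + 1 := by
  rcases eq_or_ne (c : ℕ) 0 with h | h
  · have hc : c = 0 := Fin.ext h
    subst hc
    simp [Fin.succAbove, Fin.castSucc_lt_iff_succ_le]
  · rw [Fin.succAbove_of_lt_succ]
    · simp [h]
    · rw [Fin.lt_def]
      simp only [Fin.val_one, Fin.val_succ]
      omega

lemma prod_Ioi_castSucc'' {M : Type*} [CommMonoid M] {n : ℕ} (i : Fin n) (g : Fin (n+1) → M) :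
    ∏ j ∈ Finset.Ioi i.castSucc, g j = (∏ j ∈ Finset.Ioi i, g j.castSucc) * g (Fin.last n) := by
  rw [← Finset.filter_lt_eq_Ioi, ← Finset.filter_lt_eq_Ioi,
      Finset.prod_filter, Finset.prod_filter, Fin.prod_univ_castSucc]
  simp [Fin.castSucc_lt_castSucc_iff, Fin.castSucc_lt_last]

lemma double_split' {M : Type*} [CommMonoid M] (n : ℕ) (f : Fin (n+1) → Fin (n+1) → M) :
    ∏ i : Fin (n+1), ∏ j ∈ Finset.Ioi i, f i j
      = (∏ i : Fin n, ∏ j ∈ Finset.Ioi i, f i.castSucc j.castSucc)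
        * ∏ i : Fin n, f i.castSucc (Fin.last n) := by
  rw [Fin.prod_univ_castSucc]
  have h1 : ∏ j ∈ Finset.Ioi (Fin.last n), f (Fin.last n) j = 1 := by
    convert Finset.prod_empty
    ext j
    simp [Fin.le_last, Finset.mem_Ioi, not_lt]
  rw [h1, mul_one, ← Finset.prod_mul_distrib]
  exact Finset.prod_congr rfl fun i _ => prod_Ioi_castSucc'' i _

lemma coeff_one_prod' {R : Type*} [CommRing R] {ι : Type*} [DecidableEq ι]
    (s : Finset ι) (a : ι → R) :
    (∏ c ∈ s, (X - C (a c))).coeff 1 = ∑ c ∈ s, ∏ d ∈ s.erase c, (-(a d)) := by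
  induction s using Finset.induction with
  | empty => simp [Polynomial.coeff_one]
  | insert i s hi ih =>
    rw [Finset.prod_insert hi, Finset.sum_insert hi, Finset.erase_insert hi]
    have hc0 : (∏ c ∈ s, (X - C (a c))).coeff 0 = ∏ d ∈ s, (-(a d)) := by
      rw [Polynomial.coeff_zero_eq_eval_zero]
      simp [Polynomial.eval_prod]
    rw [sub_mul, Polynomial.coeff_sub, Polynomial.coeff_X_mul, Polynomial.coeff_C_mul, hc0, ih,
      Finset.mul_sum]
    rw [sub_eq_add_neg, ← Finset.sum_neg_distrib]
    congr 1
    refine Finset.sum_congr rfl fun c hc => ?_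
    have h2 : (insert i s).erase c = insert i (s.erase c) := by
      rw [Finset.erase_insert_of_ne (by rintro rfl; exact hi hc)]
    rw [h2, Finset.prod_insert (by simp [hi, Finset.mem_erase])]
    ring

lemma det_special' {R : Type*} [CommRing R] {n : ℕ} (u : Fin (n+1) → Rˣ) :
    Matrix.det (Matrix.of fun r c : Fin (n+1) =>
        ((u c : R) ^ (if (r : ℕ) = 0 then 0 else (r : ℕ) + 1)))
      = (∏ i : Fin (n+1), ∏ j ∈ Finset.Ioi i, ((u j : R) - (u i : R)))
        * (∏ c : Fin (n+1), (u c : R)) * ∑ c : Fin (n+1), (((u c)⁻¹ : Rˣ) : R) := by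
  classical
  set v : Fin (n+2) → R[X] := Fin.snoc (fun c => C (u c : R)) X with hv
  set V : R := ∏ i : Fin (n+1), ∏ j ∈ Finset.Ioi i, ((u j : R) - (u i : R)) with hV
  set Pu : R := ∏ c : Fin (n+1), (u c : R) with hPu
  set S : R := ∑ c : Fin (n+1), (((u c)⁻¹ : Rˣ) : R) with hS
  -- Step A : det (vandermonde v) = C V * ∏ (X - C (u i))
  have stepA : (Matrix.vandermonde v).det = C V * ∏ i : Fin (n+1), (X - C (u i : R)) := by
    rw [Matrix.det_vandermonde, double_split']
    congr 1
    · rw [hV, map_prod]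
      refine Finset.prod_congr rfl fun i _ => ?_
      rw [map_prod]
      refine Finset.prod_congr rfl fun j _ => ?_
      simp [hv, Fin.snoc_castSucc, map_sub]
    · refine Finset.prod_congr rfl fun i _ => ?_
      simp [hv, Fin.snoc_castSucc, Fin.snoc_last]
  -- Step B : Laplace expansion along the last row
  have stepB : (Matrix.vandermonde v).det
      = ∑ j : Fin (n+2), (-1 : R[X]) ^ ((Fin.last (n+1) : ℕ) + (j : ℕ))
          * X ^ (j : ℕ)
          * C (Matrix.det (Matrix.of fun r c : Fin (n+1) =>
              ((u r : R) ^ ((j.succAbove c : ℕ))))) := by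
    rw [Matrix.det_succ_row _ (Fin.last (n+1))]
    refine Finset.sum_congr rfl fun j _ => ?_
    congr 1
    · congr 1
      simp [Matrix.vandermonde, hv, Fin.snoc_last]
    · rw [RingHom.map_det]
      congr 1
      ext r c
      simp [Matrix.vandermonde, hv, Fin.succAbove_last, Fin.snoc_castSucc, map_pow]
  -- the matrix in question
  set D : R := Matrix.det (Matrix.of fun r c : Fin (n+1) =>
      ((u r : R) ^ (((1 : Fin (n+2)).succAbove c : ℕ)))) with hD
  -- coefficient of X^1 of step B
  have coeffB : ((Matrix.vandermonde v).det).coeff 1 = (-1 : R) ^ (n + 2) * D := by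
    rw [stepB, Polynomial.finset_sum_coeff]
    have : ∀ j : Fin (n+2),
        ((-1 : R[X]) ^ ((Fin.last (n+1) : ℕ) + (j : ℕ)) * X ^ (j : ℕ)
          * C (Matrix.det (Matrix.of fun r c : Fin (n+1) =>
              ((u r : R) ^ ((j.succAbove c : ℕ)))))).coeff 1
        = if j = (1 : Fin (n+2)) then
            (-1 : R) ^ (n + 2) * Matrix.det (Matrix.of fun r c : Fin (n+1) =>
              ((u r : R) ^ ((j.succAbove c : ℕ)))) else 0 := by
      intro j
      have hrw : ((-1 : R[X]) ^ ((Fin.last (n+1) : ℕ) + (j : ℕ)) * X ^ (j : ℕ)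
          * C (Matrix.det (Matrix.of fun r c : Fin (n+1) =>
              ((u r : R) ^ ((j.succAbove c : ℕ))))))
          = C ((-1 : R) ^ ((n+1) + (j : ℕ)) * Matrix.det (Matrix.of fun r c : Fin (n+1) =>
              ((u r : R) ^ ((j.succAbove c : ℕ))))) * X ^ (j : ℕ) := by
        rw [show (-1 : R[X]) = C (-1 : R) by simp, ← map_pow, Fin.val_last, Polynomial.C_mul]
        ring
      rw [hrw, Polynomial.coeff_C_mul, Polynomial.coeff_X_pow]
      rcases eq_or_ne j (1 : Fin (n+2)) with rfl | hj
      · simp [Fin.val_one]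
      · have : ((j : ℕ) ≠ 1) := by
          intro h
          exact hj (Fin.ext (by simp [Fin.val_one, h]))
        simp [hj, this, Ne.symm this]
    rw [Finset.sum_congr rfl fun j _ => this j, Finset.sum_ite_eq' Finset.univ]
    simp [hD]
  -- coefficient of X^1 of step A
  have coeffA : ((Matrix.vandermonde v).det).coeff 1 = V * ((-1 : R) ^ n * Pu * S) := by
    rw [stepA, Polynomial.coeff_C_mul, coeff_one_prod']
    congr 1
    have herase : ∀ c : Fin (n+1),
        ∏ d ∈ Finset.univ.erase c, (-(u d : R)) = (-1 : R) ^ n * ((((u c)⁻¹ : Rˣ) : R) * Pu) := by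
      intro c
      have hcard : (Finset.univ.erase c).card = n := by
        rw [Finset.card_erase_of_mem (Finset.mem_univ c), Finset.card_univ, Fintype.card_fin]
        rfl
      have h1 : ∏ d ∈ Finset.univ.erase c, (-(u d : R))
          = (-1 : R) ^ n * ∏ d ∈ Finset.univ.erase c, (u d : R) := by
        rw [show (fun d => (-(u d : R))) = fun d => (-1 : R) * (u d : R) by funext d; ring]
        rw [Finset.prod_mul_distrib, Finset.prod_const, hcard]
      have h2 : ∏ d ∈ Finset.univ.erase c, (u d : R) = (((u c)⁻¹ : Rˣ) : R) * Pu := by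
        have h3 : (u c : R) * ∏ d ∈ Finset.univ.erase c, (u d : R) = Pu := by
          rw [hPu]
          exact Finset.mul_prod_erase Finset.univ (fun d => ((u d : R))) (Finset.mem_univ c)
        calc ∏ d ∈ Finset.univ.erase c, (u d : R)
            = (((u c)⁻¹ : Rˣ) : R) * ((u c : R) * ∏ d ∈ Finset.univ.erase c, (u d : R)) := by
              rw [← mul_assoc, Units.inv_mul, one_mul]
          _ = (((u c)⁻¹ : Rˣ) : R) * Pu := by rw [h3]
      rw [h1, h2]
    rw [Finset.sum_congr rfl fun c _ => herase c, ← Finset.mul_sum]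
    have h4 : ∑ c : Fin (n+1), ((((u c)⁻¹ : Rˣ) : R) * Pu) = S * Pu := by
      rw [hS, ← Finset.sum_mul]
    rw [h4]; ring
  -- combine
  have h5 : (-1 : R) ^ (n + 2) * (-1 : R) ^ (n + 2) = 1 := by
    rw [← pow_add]; exact Even.neg_one_pow ⟨n + 2, by ring⟩
  have h6 : (-1 : R) ^ (n + 2) * (-1 : R) ^ n = 1 := by
    rw [← pow_add]; exact Even.neg_one_pow ⟨n + 1, by ring⟩
  have hgoal : Matrix.det (Matrix.of fun r c : Fin (n+1) =>
        ((u c : R) ^ (if (r : ℕ) = 0 then 0 else (r : ℕ) + 1))) = D := by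
    rw [hD, ← Matrix.det_transpose]
    congr 1
    ext r c
    simp only [Matrix.transpose_apply, Matrix.of_apply, succAbove_one_val']
  have hE : (-1 : R) ^ (n + 2) * D = V * ((-1 : R) ^ n * Pu * S) := by
    rw [← coeffB, coeffA]
  calc Matrix.det (Matrix.of fun r c : Fin (n+1) =>
        ((u c : R) ^ (if (r : ℕ) = 0 then 0 else (r : ℕ) + 1)))
      = D := hgoal
    _ = ((-1 : R) ^ (n + 2) * (-1 : R) ^ (n + 2)) * D := by rw [h5, one_mul]
    _ = (-1 : R) ^ (n + 2) * ((-1 : R) ^ (n + 2) * D) := by ring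
    _ = (-1 : R) ^ (n + 2) * (V * ((-1 : R) ^ n * Pu * S)) := by rw [hE]
    _ = ((-1 : R) ^ (n + 2) * (-1 : R) ^ n) * (V * Pu * S) := by ring
    _ = V * Pu * S := by rw [h6, one_mul]


/-- With `x_c := N^σ_{e c}(ξ)` and exponents `(0, 2, 3, …, k)`, the matrix with
`(r,c)` entry `x_c^{m_r}` has unit determinant iff `∑ x_c⁻¹` is a unit. -/
theorem det_unit_iff_sum_inv_unit {R : Type*} [CommRing R] (σ : RingAut R) (ξ : Rˣ)
    {k t : ℕ} (hk : 1 ≤ k) (ht : k ≤ t)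
    (hdiff : ∀ i ∈ Finset.range k ∪ Finset.Ico t (t + k),
      ∀ j ∈ Finset.range k ∪ Finset.Ico t (t + k), i ≠ j →
        IsUnit ((NsU σ i ξ : R) - (NsU σ j ξ : R)))
    (e : Fin k → ℕ) (hinj : Function.Injective e)
    (he : ∀ c, e c ∈ Finset.range k ∪ Finset.Ico t (t + k)) :
    IsUnit (Matrix.det (Matrix.of fun r c : Fin k =>
        ((NsU σ (e c) ξ : R) ^ (if (r : ℕ) = 0 then 0 else (r : ℕ) + 1))))
      ↔ IsUnit (∑ c : Fin k, (((NsU σ (e c) ξ)⁻¹ : Rˣ) : R)) := by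
  obtain ⟨n, rfl⟩ : ∃ n, k = n + 1 := ⟨k - 1, by omega⟩
  rw [det_special' (fun c : Fin (n+1) => NsU σ (e c) ξ)]
  have hV : IsUnit (∏ i : Fin (n+1), ∏ j ∈ Finset.Ioi i,
      ((NsU σ (e j) ξ : R) - (NsU σ (e i) ξ : R))) := by
    refine Finset.prod_induction _ IsUnit (fun a b => IsUnit.mul) isUnit_one ?_
    intro i _
    refine Finset.prod_induction _ IsUnit (fun a b => IsUnit.mul) isUnit_one ?_
    intro j hj
    exact hdiff (e j) (he j) (e i) (he i)
      (fun h => (Finset.mem_Ioi.mp hj).ne' (hinj h))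
  have hP : IsUnit (∏ c : Fin (n+1), (NsU σ (e c) ξ : R)) := by
    refine Finset.prod_induction _ IsUnit (fun a b => IsUnit.mul) isUnit_one ?_
    intro c _
    exact (NsU σ (e c) ξ).isUnit
  constructor
  · intro h
    exact (IsUnit.mul_iff.mp h).2
  · intro h
    exact ((hV.mul hP).mul h)
end

section
/- Let R be a commutative ring, σ a ring automorphism of R, ξ a unit of R, and let k ≥ 2 and t ≥ k be integers with E = {0,1,…,k−1} ∪ {t,t+1,…,t+k−1}. Assume that for all distinct i, j ∈ E the element N^σ_i(ξ) − N^σ_j(ξ) is a unit of R. Fix an injective map e : {0,…,k−1} → E and set x_c := N^σ_{e(c)}(ξ) for 0 ≤ c ≤ k−1 (each x_c is a unit). Define exponents m_0 = 0, m_r = r+1 for 1 ≤ r ≤ k−2, and m_{k−1} = k+1 (i.e., the exponent list is (0,2,3,…,k−1,k+1)). Then the k×k matrix whose (r,c) entry is x_c^{m_r} has determinant a unit of R if and only if (∑_{c=0}^{k−1} x_c)·(∑_{c=0}^{k−1} x_c^{−1}) − 1 is a unit of R. -/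
open Polynomial Finset

private lemma aux_isUnit_prod {ι M : Type*} [CommMonoid M] (s : Finset ι) (f : ι → M)
    (h : ∀ i ∈ s, IsUnit (f i)) : IsUnit (∏ i ∈ s, f i) :=
  Finset.prod_induction f IsUnit (fun _ _ => IsUnit.mul) isUnit_one h

private lemma aux_det_updateRow_sum {n R ι : Type*} [DecidableEq n] [Fintype n] [CommRing R]
    (M : Matrix n n R) (j : n) (s : Finset ι) (v : ι → n → R) :
    (M.updateRow j (∑ i ∈ s, v i)).det = ∑ i ∈ s, (M.updateRow j (v i)).det := by
  classical
  induction s using Finset.induction_on with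
  | empty =>
      simp only [Finset.sum_empty]
      exact Matrix.det_eq_zero_of_row_eq_zero j (by simp)
  | @insert a s ha ih =>
      rw [Finset.sum_insert ha, Matrix.det_updateRow_add, ih, Finset.sum_insert ha]

set_option maxHeartbeats 2000000 in
private lemma aux_core {R : Type*} [CommRing R] {k : ℕ} (hk : 2 ≤ k) (x : Fin k → Rˣ)
    (hd : ∀ i j : Fin k, i ≠ j → IsUnit ((x i : R) - (x j : R))) :
    IsUnit (Matrix.det (Matrix.of fun r c : Fin k =>
        ((x c : R) ^ (if (r : ℕ) = 0 then 0 else if (r : ℕ) = k - 1 then k + 1 else (r : ℕ) + 1))))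
      ↔ IsUnit ((∑ c : Fin k, (x c : R)) * (∑ c : Fin k, (((x c)⁻¹ : Rˣ) : R)) - 1) := by
  classical
  rcases subsingleton_or_nontrivial R with hR | hR
  · exact ⟨fun _ => isUnit_of_subsingleton _, fun _ => isUnit_of_subsingleton _⟩
  set S : R := ∑ c : Fin k, (x c : R) with hS
  set S' : R := ∑ c : Fin k, (((x c)⁻¹ : Rˣ) : R) with hS'
  set E : Rˣ := ∏ c : Fin k, x c with hE
  have hEv : (E : R) = ∏ c : Fin k, (x c : R) := by rw [hE]; push_cast; rfl
  have hcard : (Finset.univ : Finset (Fin k)).card = k := by simp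
  set P : Polynomial R := ∏ c : Fin k, (X - C ((x c : R))) with hP
  have hPm : P.Monic := monic_prod_of_monic _ _ fun _ _ => monic_X_sub_C _
  have hPdeg : P.natDegree = k := by
    rw [hP, natDegree_prod_of_monic _ _ fun _ _ => monic_X_sub_C _]
    simp [natDegree_X_sub_C]
  have hPk : P.coeff k = 1 := by
    have := hPm.coeff_natDegree
    rwa [hPdeg] at this
  have hPtop : ∀ m, k < m → P.coeff m = 0 := fun m hm =>
    coeff_eq_zero_of_natDegree_lt (by omega)
  have hP0 : P.coeff 0 = (-1) ^ k * (E : R) := by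
    rw [coeff_zero_eq_eval_zero, hP, eval_prod]
    simp only [eval_sub, eval_X, eval_C, zero_sub]
    calc (∏ c : Fin k, -(x c : R)) = (∏ _c : Fin k, (-1 : R)) * ∏ c : Fin k, (x c : R) := by
          rw [← Finset.prod_mul_distrib]; simp
      _ = (-1) ^ k * (E : R) := by rw [Finset.prod_const, hcard, hEv]
  have hPk1 : P.coeff (k - 1) = -S := by
    have h1 := Polynomial.Monic.nextCoeff_prod Finset.univ
      (fun c : Fin k => X - C ((x c : R))) (fun _ _ => monic_X_sub_C _)
    rw [← hP, nextCoeff_of_natDegree_pos (by omega), hPdeg] at h1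
    rw [h1]
    simp [nextCoeff_X_sub_C, hS]
  have hprod_erase : ∀ c : Fin k,
      (∏ c' ∈ Finset.univ.erase c, (x c' : R)) = (E : R) * (((x c)⁻¹ : Rˣ) : R) := by
    intro c
    have h0 := Finset.mul_prod_erase Finset.univ (fun c : Fin k => (x c : R)) (Finset.mem_univ c)
    calc (∏ c' ∈ Finset.univ.erase c, (x c' : R))
        = (((x c)⁻¹ : Rˣ) : R) * ((x c : R) * ∏ c' ∈ Finset.univ.erase c, (x c' : R)) := by
          rw [← mul_assoc, Units.inv_mul, one_mul]
      _ = (E : R) * (((x c)⁻¹ : Rˣ) : R) := by rw [h0, ← hEv, mul_comm]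
  have hP1 : P.coeff 1 = (-1) ^ (k - 1) * ((E : R) * S') := by
    have hder : derivative P = ∑ c : Fin k, ∏ c' ∈ Finset.univ.erase c, (X - C ((x c' : R))) := by
      rw [hP, Finset.prod_eq_multiset_prod, Polynomial.derivative_prod,
        Finset.sum_eq_multiset_sum]
      congr 1
      apply Multiset.map_congr rfl
      intro c _
      rw [derivative_X_sub_C, mul_one, ← Finset.erase_val, ← Finset.prod_eq_multiset_prod]
    have h2 : P.coeff 1 = (derivative P).eval 0 := by
      rw [← coeff_zero_eq_eval_zero, coeff_derivative]
      push_cast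
      ring
    have h3 : ∀ c : Fin k, (∏ c' ∈ Finset.univ.erase c, (X - C ((x c' : R)))).eval 0
        = (-1) ^ (k - 1) * ((E : R) * (((x c)⁻¹ : Rˣ) : R)) := by
      intro c
      rw [eval_prod]
      simp only [eval_sub, eval_X, eval_C, zero_sub]
      calc (∏ c' ∈ Finset.univ.erase c, -(x c' : R))
          = (∏ _c' ∈ Finset.univ.erase c, (-1 : R)) * ∏ c' ∈ Finset.univ.erase c, (x c' : R) := by
            rw [← Finset.prod_mul_distrib]; simp
        _ = (-1) ^ (k - 1) * ((E : R) * (((x c)⁻¹ : Rˣ) : R)) := by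
            rw [Finset.prod_const, Finset.card_erase_of_mem (Finset.mem_univ c), hcard,
              hprod_erase c]
    rw [h2, hder, eval_finset_sum]
    rw [Finset.sum_congr rfl fun c _ => h3 c, ← Finset.mul_sum, ← Finset.mul_sum, hS']
  set Q : Polynomial R := X ^ (k + 1) - P * (X + C S) with hQ
  have hQc : ∀ m, k ≤ m → Q.coeff m = 0 := by
    intro m hm
    have h3 : Q.coeff m = (if m = k + 1 then (1 : R) else 0)
        - (P.coeff (m - 1) + P.coeff m * S) := by
      obtain ⟨m', rfl⟩ : ∃ m', m = m' + 1 := ⟨m - 1, by omega⟩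
      rw [hQ, coeff_sub, coeff_X_pow, mul_add, coeff_add, coeff_mul_X, coeff_mul_C]
      simp
    rw [h3]
    by_cases h1 : m = k
    · subst h1
      rw [if_neg (by omega), hPk1, hPk]
      ring
    by_cases h2 : m = k + 1
    · subst h2
      rw [if_pos rfl, hPtop (k + 1) (by omega), show k + 1 - 1 = k from by omega, hPk]
      ring
    · rw [if_neg h2, hPtop m (by omega), hPtop (m - 1) (by omega)]
      ring
  have hQdeg : Q.natDegree < k := by
    rcases eq_or_ne Q 0 with h | h
    · rw [h, natDegree_zero]; omega
    · by_contra hlt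
      push_neg at hlt
      exact (Polynomial.leadingCoeff_ne_zero.mpr h) (hQc _ hlt)
  have hPeval : ∀ c : Fin k, P.eval ((x c : R)) = 0 := by
    intro c
    rw [hP, eval_prod]
    exact Finset.prod_eq_zero (Finset.mem_univ c) (by simp)
  have heval : ∀ c : Fin k, (x c : R) ^ (k + 1) = ∑ i : Fin k, Q.coeff i * (x c : R) ^ (i : ℕ) := by
    intro c
    have h1 : Q.eval ((x c : R)) = (x c : R) ^ (k + 1) := by
      rw [hQ]
      simp [hPeval c]
    rw [← h1, eval_eq_sum_range' hQdeg,
      Fin.sum_univ_eq_sum_range (fun i => Q.coeff i * (x c : R) ^ i) k]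
  set M : Matrix (Fin k) (Fin k) R := Matrix.of (fun r c : Fin k =>
    ((x c : R) ^ (if (r : ℕ) = 0 then 0 else if (r : ℕ) = k - 1 then k + 1 else (r : ℕ) + 1)))
    with hM
  set r1 : Fin k := ⟨k - 1, by omega⟩ with hr1
  have hr1v : (r1 : ℕ) = k - 1 := rfl
  have hMval : ∀ (r c : Fin k), M r c = (x c : R) ^
      (if (r : ℕ) = 0 then 0 else if (r : ℕ) = k - 1 then k + 1 else (r : ℕ) + 1) := by
    intro r c
    rw [hM]
    rfl
  have hMrow : ∀ c, M r1 c = (x c : R) ^ (k + 1) := by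
    intro c
    rw [hMval, hr1v, if_neg (by omega), if_pos rfl]
  have hstep : M.det = ∑ i : Fin k,
      Q.coeff i * (M.updateRow r1 (fun c => (x c : R) ^ (i : ℕ))).det := by
    have hupd : M.updateRow r1 (∑ i : Fin k, Q.coeff i • fun c => (x c : R) ^ (i : ℕ)) = M := by
      ext r c
      rcases eq_or_ne r r1 with rfl | hr
      · rw [Matrix.updateRow_self, Finset.sum_apply]
        simp only [Pi.smul_apply, smul_eq_mul]
        rw [hMrow c]
        exact (heval c).symm
      · rw [Matrix.updateRow_ne hr]
    conv_lhs => rw [← hupd]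
    rw [aux_det_updateRow_sum]
    exact Finset.sum_congr rfl fun i _ => Matrix.det_updateRow_smul M r1 _ _
  set i1 : Fin k := ⟨1, by omega⟩ with hi1
  have hzero : ∀ i : Fin k, i ≠ i1 →
      (M.updateRow r1 (fun c => (x c : R) ^ (i : ℕ))).det = 0 := by
    intro i hi
    have hiv : (i : ℕ) ≠ 1 := fun h => hi (Fin.ext h)
    have hlt := i.isLt
    set r0 : Fin k := ⟨if (i : ℕ) = 0 then 0 else (i : ℕ) - 1, by split_ifs <;> omega⟩ with hr0
    have hr0v : (r0 : ℕ) = if (i : ℕ) = 0 then 0 else (i : ℕ) - 1 := rfl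
    have hne : r0 ≠ r1 := by
      apply Fin.ne_of_val_ne
      rw [hr0v, hr1v]
      split_ifs <;> omega
    apply Matrix.det_zero_of_row_eq hne
    funext c
    rw [Matrix.updateRow_ne hne, Matrix.updateRow_self, hMval, hr0v]
    by_cases h0 : (i : ℕ) = 0
    · rw [if_pos h0, if_pos rfl, h0]
    · rw [if_neg h0, if_neg (by omega), if_neg (by omega)]
      congr 1
      omega
  have hN : IsUnit (M.updateRow r1 (fun c => (x c : R) ^ ((1 : ℕ)))).det := by
    have hkm : ∀ r : Fin k, (r : ℕ) ≠ 0 → (r : ℕ) ≠ k - 1 → (r : ℕ) + 1 < k := by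
      intro r h1 h2
      have := r.isLt
      omega
    set g : Fin k → Fin k := fun r =>
      if h1 : (r : ℕ) = 0 then ⟨0, by omega⟩
      else if h2 : (r : ℕ) = k - 1 then ⟨1, by omega⟩
      else ⟨(r : ℕ) + 1, hkm r h1 h2⟩ with hg
    have hgval : ∀ r : Fin k, ((g r : Fin k) : ℕ) =
        if (r : ℕ) = 0 then 0 else if (r : ℕ) = k - 1 then 1 else (r : ℕ) + 1 := by
      intro r
      by_cases h1 : (r : ℕ) = 0
      · simp [hg, h1]
      by_cases h2 : (r : ℕ) = k - 1
      · have hne0 : ¬(k - 1 = 0) := by omega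
        simp [hg, h1, h2, hne0]
      · simp [hg, h1, h2]
    have hginj : Function.Injective g := by
      intro a b h
      have ha := a.isLt
      have hb := b.isLt
      have h' : ((g a : Fin k) : ℕ) = ((g b : Fin k) : ℕ) := congrArg Fin.val h
      rw [hgval a, hgval b] at h'
      apply Fin.ext
      split_ifs at h' <;> omega
    let p : Equiv.Perm (Fin k) := Equiv.ofBijective g (Finite.injective_iff_bijective.mp hginj)
    have hsub : M.updateRow r1 (fun c => (x c : R) ^ (1 : ℕ))
        = ((Matrix.vandermonde (fun c => (x c : R))).transpose).submatrix p id := by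
      ext r c
      simp only [Matrix.submatrix_apply, Matrix.transpose_apply, Matrix.vandermonde_apply, id]
      have hpr : p r = g r := rfl
      rw [hpr]
      rcases eq_or_ne r r1 with rfl | hr
      · rw [Matrix.updateRow_self]
        rw [hgval r1, hr1v, if_neg (by omega), if_pos rfl]
      · rw [Matrix.updateRow_ne hr]
        have hrv : (r : ℕ) ≠ k - 1 := by
          intro h
          exact hr (Fin.ext (by rw [h, hr1v]))
        rw [hMval, hgval r, if_neg hrv]
        by_cases h0 : (r : ℕ) = 0
        · rw [if_pos h0, if_pos h0]
        · rw [if_neg h0, if_neg h0, if_neg hrv]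
    rw [hsub, Matrix.det_permute]
    apply IsUnit.mul
    · rcases Int.units_eq_one_or (Equiv.Perm.sign p) with h | h <;> simp [h]
    · rw [Matrix.det_transpose, Matrix.det_vandermonde]
      apply aux_isUnit_prod
      intro i _
      apply aux_isUnit_prod
      intro j hj
      have hij : i ≠ j := fun h => by
        rw [h] at hj
        exact absurd (Finset.mem_Ioi.mp hj) (lt_irrefl _)
      exact hd j i (Ne.symm hij)
  have hdet : M.det = Q.coeff 1 * (M.updateRow r1 (fun c => (x c : R) ^ (1 : ℕ))).det := by
    rw [hstep, Finset.sum_eq_single i1]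
    · intro i _ hi
      rw [hzero i hi, mul_zero]
    · intro h
      exact absurd (Finset.mem_univ i1) h
  have hb : Q.coeff 1 = (-1) ^ k * (E : R) * (S * S' - 1) := by
    have hpow : ((-1 : R)) ^ (k - 1) * (-1) = (-1) ^ k := by
      rw [← pow_succ]
      congr 1
      omega
    rw [hQ, coeff_sub, coeff_X_pow, if_neg (by omega), mul_add, coeff_add, coeff_mul_X,
      coeff_mul_C, hP0, hP1]
    linear_combination ((E : R) * S * S') * hpow
  rw [hdet, hb]
  rw [(Commute.all _ _).isUnit_mul_iff, (Commute.all _ _).isUnit_mul_iff,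
    (Commute.all _ _).isUnit_mul_iff]
  have h1 : IsUnit ((-1 : R) ^ k) := (isUnit_one.neg).pow k
  have h2 : IsUnit ((E : R)) := E.isUnit
  tauto

/-- With `x_c := N^σ_{e c}(ξ)` and exponents `(0, 2, 3, …, k-1, k+1)`, the matrix
with `(r,c)` entry `x_c^{m_r}` has unit determinant iff
`(∑ x_c)·(∑ x_c⁻¹) - 1` is a unit. -/
theorem det_unit_iff_sum_mul_sum_inv_sub_one_unit {R : Type*} [CommRing R]
    (σ : RingAut R) (ξ : Rˣ) {k t : ℕ} (hk : 2 ≤ k) (ht : k ≤ t)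
    (hdiff : ∀ i ∈ Finset.range k ∪ Finset.Ico t (t + k),
      ∀ j ∈ Finset.range k ∪ Finset.Ico t (t + k), i ≠ j →
        IsUnit ((NsU σ i ξ : R) - (NsU σ j ξ : R)))
    (e : Fin k → ℕ) (hinj : Function.Injective e)
    (he : ∀ c, e c ∈ Finset.range k ∪ Finset.Ico t (t + k)) :
    IsUnit (Matrix.det (Matrix.of fun r c : Fin k =>
        ((NsU σ (e c) ξ : R) ^
          (if (r : ℕ) = 0 then 0 else if (r : ℕ) = k - 1 then k + 1 else (r : ℕ) + 1))))
      ↔ IsUnit ((∑ c : Fin k, (NsU σ (e c) ξ : R)) *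
          (∑ c : Fin k, (((NsU σ (e c) ξ)⁻¹ : Rˣ) : R)) - 1) := by
  have hd : ∀ i j : Fin k, i ≠ j →
      IsUnit (((fun c => NsU σ (e c) ξ) i : R) - ((fun c => NsU σ (e c) ξ) j : R)) := by
    intro i j hij
    exact hdiff (e i) (he i) (e j) (he j) fun h => hij (hinj h)
  exact aux_core hk (fun c => NsU σ (e c) ξ) hd
end

section
/- Let p be a prime, F a field of characteristic p, k ≥ 1, and x = (x_0,…,x_{k−1}) ∈ F^k. Let M be the k×k matrix whose row 0 has all entries equal to 1, and whose (r,c) entry for 1 ≤ r ≤ k−1 is x_c^{p^{r−1}}. Then det M ≠ 0 if and only if for every nonzero vector (b_0,…,b_{k−1}) ∈ (ℤ/pℤ)^k with ∑_{c=0}^{k−1} b_c = 0 one has ∑_{c=0}^{k−1} b_c · x_c ≠ 0. -/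
section aux

variable (p : ℕ) [Fact p.Prime] {F : Type*} [Field F] [CharP F p]

/-- Key lemma: `𝔽_p`-combinations commute with `p^j`-th powers in char `p`. -/
private lemma key_pow {m : ℕ} (j : ℕ) (b : Fin m → ZMod p) (z : Fin m → F) :
    (∑ c, ZMod.castHom (dvd_refl p) F (b c) * z c) ^ p ^ j =
      ∑ c, ZMod.castHom (dvd_refl p) F (b c) * z c ^ p ^ j := by
  induction j with
  | zero => simp
  | succ j ih =>
      rw [pow_succ, pow_mul, ih, sum_pow_char]
      refine Finset.sum_congr rfl fun c _ => ?_
      rw [mul_pow, ← pow_mul, ← pow_succ, ← map_pow, ZMod.pow_card]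

end aux

/-- Over a field `F` of characteristic `p`, the `k×k` matrix whose row `0` is all
ones and whose `(r,c)` entry for `1 ≤ r ≤ k-1` is `x_c^{p^{r-1}}` has nonzero
determinant iff for every nonzero `b ∈ (ℤ/pℤ)^k` with `∑ b_c = 0` one has
`∑ b_c · x_c ≠ 0`. -/
theorem ones_moore_det_ne_zero_iff (p : ℕ) (hp : p.Prime) {F : Type*} [Field F]
    [CharP F p] {k : ℕ} (hk : 1 ≤ k) (x : Fin k → F) :
    Matrix.det (Matrix.of fun r c : Fin k =>
        if (r : ℕ) = 0 then (1 : F) else x c ^ p ^ ((r : ℕ) - 1)) ≠ 0 ↔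
      ∀ b : Fin k → ZMod p, b ≠ 0 → (∑ c : Fin k, b c) = 0 →
        ∑ c : Fin k, ZMod.castHom (dvd_refl p) F (b c) * x c ≠ 0 := by
  classical
  haveI : Fact p.Prime := ⟨hp⟩
  obtain ⟨n, rfl⟩ : ∃ n, k = n + 1 := ⟨k - 1, by omega⟩
  set M : Matrix (Fin (n+1)) (Fin (n+1)) F := Matrix.of fun r c : Fin (n+1) =>
      if (r : ℕ) = 0 then (1 : F) else x c ^ p ^ ((r : ℕ) - 1) with hM
  constructor
  · -- det ≠ 0 → condition
    intro hdet b hb hsum hzero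
    apply hdet
    rw [← Matrix.exists_mulVec_eq_zero_iff]
    refine ⟨fun c => ZMod.castHom (dvd_refl p) F (b c), ?_, ?_⟩
    · intro h
      apply hb
      funext c
      have := congrFun h c
      exact ZMod.castHom_injective F (by simpa using this)
    · funext r
      simp only [Matrix.mulVec, dotProduct, hM, Matrix.of_apply, Pi.zero_apply]
      by_cases hr : (r : ℕ) = 0
      · have he : ∀ c ∈ Finset.univ, (if (r:ℕ) = 0 then (1:F) else x c ^ p ^ ((r:ℕ)-1))
            * ZMod.castHom (dvd_refl p) F (b c) = ZMod.castHom (dvd_refl p) F (b c) :=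
          fun c _ => by rw [if_pos hr, one_mul]
        rw [Finset.sum_congr rfl he, ← map_sum, hsum, map_zero]
      · simp only [if_neg hr]
        have : ∑ c, x c ^ p ^ ((r:ℕ) - 1) * ZMod.castHom (dvd_refl p) F (b c) =
            (∑ c, ZMod.castHom (dvd_refl p) F (b c) * x c) ^ p ^ ((r:ℕ) - 1) := by
          rw [key_pow]
          exact Finset.sum_congr rfl fun c _ => (mul_comm _ _)
        rw [this, hzero, zero_pow (pow_ne_zero _ hp.pos.ne')]
  · -- condition → det ≠ 0
    intro hcond hdet
    obtain ⟨v, hv, hrel⟩ := Matrix.exists_vecMul_eq_zero_iff.mpr hdet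
    -- row relation: ∀ c, v 0 + ∑ j : Fin n, v j.succ * x c ^ p ^ j = 0
    have hrow : ∀ c : Fin (n+1), v 0 + ∑ j : Fin n, v j.succ * x c ^ p ^ (j:ℕ) = 0 := by
      intro c
      have := congrFun hrel c
      simp only [Matrix.vecMul, dotProduct, hM, Matrix.of_apply, Pi.zero_apply] at this
      rw [Fin.sum_univ_succ] at this
      simpa using this
    by_cases ha : ∀ j : Fin n, v j.succ = 0
    · -- then v 0 = 0, so v = 0
      apply hv
      have h0 := hrow 0
      simp only [ha, zero_mul, Finset.sum_const_zero, add_zero] at h0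
      funext r
      rcases Fin.eq_zero_or_eq_succ r with rfl | ⟨j, rfl⟩
      · exact h0
      · exact ha j
    · push_neg at ha
      obtain ⟨j0, hj0⟩ := ha
      -- the additive polynomial f = ∑ j, C (v j.succ) * X ^ (p ^ j)
      set f : Polynomial F := ∑ j : Fin n, Polynomial.C (v j.succ) * Polynomial.X ^ (p ^ (j:ℕ))
        with hf
      have hcoeff : ∀ i : Fin n, f.coeff (p ^ (i:ℕ)) = v i.succ := by
        intro i
        rw [hf, Polynomial.finset_sum_coeff]
        rw [Finset.sum_eq_single i]
        · simp
        · intro j _ hji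
          rw [Polynomial.coeff_C_mul, Polynomial.coeff_X_pow, if_neg, mul_zero]
          exact fun h => hji (Fin.ext (Nat.pow_right_injective hp.two_le h.symm))
        · simp
      have hfne : f ≠ 0 := fun h => hj0 (by rw [← hcoeff j0, h, Polynomial.coeff_zero])
      have hdeg : f.natDegree ≤ p ^ (n - 1) := by
        refine (Polynomial.natDegree_sum_le _ _).trans ?_
        rw [Finset.fold_max_le]
        refine ⟨Nat.zero_le _, fun j _ => ?_⟩
        calc (Polynomial.natDegree ∘ fun j : Fin n =>
                Polynomial.C (v j.succ) * Polynomial.X ^ (p ^ (j:ℕ))) j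
            ≤ (Polynomial.X ^ (p ^ (j:ℕ)) : Polynomial F).natDegree :=
              Polynomial.natDegree_C_mul_le _ _
          _ ≤ p ^ (n - 1) := by
              rw [Polynomial.natDegree_X_pow]
              exact Nat.pow_le_pow_right hp.pos (by omega)
      -- y c = x (c.succ) - x 0 are roots of f
      set y : Fin n → F := fun c => x c.succ - x 0 with hy
      have hfy : ∀ c : Fin n, f.eval (y c) = 0 := by
        intro c
        have h1 := hrow c.succ
        have h2 := hrow 0
        have : f.eval (y c) = (v 0 + ∑ j : Fin n, v j.succ * x c.succ ^ p ^ (j:ℕ))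
            - (v 0 + ∑ j : Fin n, v j.succ * x 0 ^ p ^ (j:ℕ)) := by
          simp only [hf, Polynomial.eval_finset_sum, Polynomial.eval_mul, Polynomial.eval_C,
            Polynomial.eval_pow, Polynomial.eval_X, hy]
          rw [add_sub_add_left_eq_sub, ← Finset.sum_sub_distrib]
          refine Finset.sum_congr rfl fun j _ => ?_
          rw [sub_pow_char_pow, mul_sub]
        rw [this, h1, h2, sub_zero]
      -- φ : (Fin n → ZMod p) → F, all values are roots of f
      set φ : (Fin n → ZMod p) → F := fun b => ∑ c, ZMod.castHom (dvd_refl p) F (b c) * y c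
        with hφ
      have hφroot : ∀ b, f.eval (φ b) = 0 := by
        intro b
        simp only [hf, Polynomial.eval_finset_sum, Polynomial.eval_mul, Polynomial.eval_C,
          Polynomial.eval_pow, Polynomial.eval_X, hφ]
        rw [show ∀ g : Fin n → F, (∑ j, v j.succ * g j) = ∑ j, v j.succ * g j from fun _ => rfl]
        calc ∑ j : Fin n, v j.succ *
              (∑ c, ZMod.castHom (dvd_refl p) F (b c) * y c) ^ p ^ (j:ℕ)
            = ∑ j : Fin n, v j.succ * ∑ c, ZMod.castHom (dvd_refl p) F (b c) * y c ^ p ^ (j:ℕ) := by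
              refine Finset.sum_congr rfl fun j _ => ?_
              rw [key_pow]
          _ = ∑ c, ZMod.castHom (dvd_refl p) F (b c) * ∑ j : Fin n, v j.succ * y c ^ p ^ (j:ℕ) := by
              simp only [Finset.mul_sum]
              rw [Finset.sum_comm]
              exact Finset.sum_congr rfl fun c _ => Finset.sum_congr rfl fun j _ => by ring
          _ = 0 := by
              refine Finset.sum_eq_zero fun c _ => ?_
              have := hfy c
              simp only [hf, Polynomial.eval_finset_sum, Polynomial.eval_mul, Polynomial.eval_C,
                Polynomial.eval_pow, Polynomial.eval_X] at this
              rw [this, mul_zero]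
      -- φ is not injective by cardinality
      have hnotinj : ¬ Function.Injective φ := by
        intro hinj
        have hcard : Fintype.card (Fin n → ZMod p) ≤ f.roots.toFinset.card := by
          rw [← Finset.card_univ]
          refine Finset.card_le_card_of_injOn φ (fun b _ => ?_) hinj.injOn
          rw [Finset.mem_coe, Multiset.mem_toFinset, Polynomial.mem_roots']
          exact ⟨hfne, hφroot b⟩
        have h1 : Fintype.card (Fin n → ZMod p) = p ^ n := by
          simp [ZMod.card]
        have h2 : f.roots.toFinset.card ≤ p ^ (n - 1) :=
          (Multiset.toFinset_card_le _).trans ((Polynomial.card_roots' f).trans hdeg)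
        have hn : 1 ≤ n := Nat.pos_of_ne_zero fun h => by subst h; exact j0.elim0
        have : p ^ n ≤ p ^ (n - 1) := h1 ▸ hcard.trans h2
        exact absurd this (not_le.mpr (Nat.pow_lt_pow_right hp.one_lt (by omega)))
      -- extract nonzero b' with φ b' = 0
      rw [Function.not_injective_iff] at hnotinj
      obtain ⟨b1, b2, heq, hne⟩ := hnotinj
      set b' : Fin n → ZMod p := b1 - b2 with hb'
      have hb'ne : b' ≠ 0 := sub_ne_zero_of_ne hne
      have hφb' : φ b' = 0 := by
        have : φ b' = φ b1 - φ b2 := by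
          simp only [hφ, hb', Pi.sub_apply, map_sub, sub_mul, Finset.sum_sub_distrib]
        rw [this, heq, sub_self]
      -- build full vector b on Fin (n+1)
      set b : Fin (n+1) → ZMod p := Fin.cons (-∑ c, b' c) b' with hb
      have hbne : b ≠ 0 := by
        intro h
        apply hb'ne
        funext c
        have := congrFun h c.succ
        simpa [hb] using this
      have hbsum : ∑ c : Fin (n+1), b c = 0 := by
        rw [Fin.sum_univ_succ]
        simp [hb]
      refine hcond b hbne hbsum ?_
      rw [Fin.sum_univ_succ]
      have : ∑ c : Fin n, ZMod.castHom (dvd_refl p) F (b c.succ) * x c.succ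
          = ∑ c : Fin n, ZMod.castHom (dvd_refl p) F (b' c) * x c.succ := by
        refine Finset.sum_congr rfl fun c _ => by simp [hb]
      rw [this]
      have hb0 : (b 0 : ZMod p) = -∑ c, b' c := by simp [hb]
      rw [hb0]
      have := hφb'
      simp only [hφ, hy, mul_sub, Finset.sum_sub_distrib, ← Finset.sum_mul] at this
      rw [sub_eq_zero] at this
      rw [map_neg, map_sum, neg_mul, this, neg_add_cancel]
end

section
/- Let R be a commutative ring, k ≥ 1, and let M and T be k×k matrices over R such that every entry of T is nilpotent. If M is MDS, then M + T is MDS. -/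
lemma det_add_nilpotent_sub {R : Type*} [CommRing R] {n : ℕ}
    (A B : Matrix (Fin n) (Fin n) R) (hB : ∀ i j, IsNilpotent (B i j)) :
    IsNilpotent (Matrix.det (A + B) - Matrix.det A) := by
  rw [← mem_nilradical]
  have h : (Ideal.Quotient.mk (nilradical R)) (Matrix.det (A + B) - Matrix.det A) = 0 := by
    rw [map_sub, RingHom.map_det, RingHom.map_det]
    have : (A + B).map (Ideal.Quotient.mk (nilradical R)) =
        A.map (Ideal.Quotient.mk (nilradical R)) := by
      ext i j
      simp only [Matrix.map_apply, Matrix.add_apply, map_add]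
      have : (Ideal.Quotient.mk (nilradical R)) (B i j) = 0 := by
        rw [Ideal.Quotient.eq_zero_iff_mem, mem_nilradical]
        exact hB i j
      rw [this, add_zero]
    rw [RingHom.mapMatrix_apply, RingHom.mapMatrix_apply, this, sub_self]
  rwa [Ideal.Quotient.eq_zero_iff_mem] at h

/-- If `M` is MDS and every entry of `T` is nilpotent, then `M + T` is MDS. -/
theorem mds_add_nilpotent {R : Type*} [CommRing R] {k : ℕ} (hk : 1 ≤ k)
    (M T : Matrix (Fin k) (Fin k) R) (hT : ∀ i j, IsNilpotent (T i j))
    (hM : IsMDS M) : IsMDS (M + T) := by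
  intro r hr f g hf hg
  have hsub : (M + T).submatrix f g = M.submatrix f g + T.submatrix f g := rfl
  have hnil : IsNilpotent (Matrix.det ((M + T).submatrix f g) - Matrix.det (M.submatrix f g)) := by
    rw [hsub]
    exact det_add_nilpotent_sub _ _ (fun i j => hT (f i) (g j))
  have hu : IsUnit (Matrix.det (M.submatrix f g)) := hM r hr f g hf hg
  have := hnil.isUnit_add_right_of_commute hu (Commute.all _ _)
  simpa using this
end

section
/- Let R be a commutative ring, k ≥ 1, and x = (x_0,…,x_{k−1}) ∈ R^k. Define exponents m_r = r for 0 ≤ r ≤ k−2 and m_{k−1} = k. Then the determinant of the k×k matrix whose (r,c) entry is x_c^{m_r} equals (∏_{0 ≤ c < c' ≤ k−1} (x_{c'} − x_c)) · (∑_{c=0}^{k−1} x_c). -/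
open Polynomial Finset Matrix

/-- Generalized Vandermonde determinant with exponent list `(0, 1, …, k-2, k)`:
`det (x_c^{m_r}) = (∏_{c < c'} (x_{c'} - x_c)) · (∑ x_c)`. -/
theorem det_vandermonde_skip_top {R : Type*} [CommRing R] {k : ℕ} (hk : 1 ≤ k)
    (x : Fin k → R) :
    Matrix.det (Matrix.of fun r c : Fin k =>
        x c ^ (if (r : ℕ) = k - 1 then k else (r : ℕ))) =
      (∏ c : Fin k, ∏ c' ∈ Finset.Ioi c, (x c' - x c)) * ∑ c : Fin k, x c := by
  obtain ⟨m, rfl⟩ : ∃ m, k = m + 1 := ⟨k - 1, (Nat.succ_pred_eq_of_pos hk).symm⟩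
  set v : Fin (m + 2) → R[X] := Fin.snoc (fun i => C (x i)) X with hv
  set V : Matrix (Fin (m + 2)) (Fin (m + 2)) R[X] := Matrix.vandermonde v with hV
  set P : R := ∏ c : Fin (m+1), ∏ c' ∈ Finset.Ioi c, (x c' - x c) with hP
  -- product formula
  have hIoi : ∀ i : Fin (m + 1), Finset.Ioi (Fin.castSucc i) =
      insert (Fin.last (m + 1)) ((Finset.Ioi i).map Fin.castSuccEmb) := by
    intro i
    ext j
    refine Fin.lastCases ?_ (fun j' => ?_) j
    · simp [Fin.castSucc_lt_last]
    · simp only [Finset.mem_Ioi, Finset.mem_insert, Finset.mem_map, Fin.castSuccEmb,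
        Fin.castSucc_lt_castSucc_iff]
      constructor
      · intro h
        exact Or.inr ⟨j', by simpa using h, rfl⟩
      · rintro (h | ⟨a, ha, h⟩)
        · exact absurd h ((Fin.castSucc_lt_last j').ne)
        · obtain rfl : a = j' := Fin.castSucc_injective _ h
          exact ha
  have hlastnotmem : ∀ i : Fin (m+1),
      Fin.last (m + 1) ∉ (Finset.Ioi i).map Fin.castSuccEmb := by
    intro i
    simp only [Finset.mem_map, Fin.castSuccEmb]
    rintro ⟨a, -, h⟩
    exact (Fin.castSucc_lt_last a).ne h
  have hIoiLast : Finset.Ioi (Fin.last (m + 1)) = (∅ : Finset (Fin (m+2))) := by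
    ext j
    simp only [Finset.mem_Ioi, Finset.notMem_empty, iff_false]
    exact fun h => absurd h (not_lt.2 (Fin.le_last j))
  have hprod : V.det = C P * ∏ i : Fin (m+1), (X - C (x i)) := by
    rw [hV, Matrix.det_vandermonde, Fin.prod_univ_castSucc]
    rw [hIoiLast]
    simp only [Finset.prod_empty, mul_one]
    have key : ∀ i : Fin (m+1), (∏ j ∈ Finset.Ioi (Fin.castSucc i), (v j - v (Fin.castSucc i)))
        = (X - C (x i)) * ∏ j ∈ Finset.Ioi i, C (x j - x i) := by
      intro i
      rw [hIoi i, Finset.prod_insert (hlastnotmem i), Finset.prod_map]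
      rw [show v (Fin.last (m+1)) = X from Fin.snoc_last _ _,
        show v (Fin.castSucc i) = C (x i) from Fin.snoc_castSucc _ _ _]
      congr 1
      refine Finset.prod_congr rfl fun j _ => ?_
      rw [show v (Fin.castSuccEmb j) = C (x j) from Fin.snoc_castSucc _ _ _, map_sub]
    rw [Finset.prod_congr rfl fun i _ => key i, Finset.prod_mul_distrib]
    rw [mul_comm]
    congr 1
    rw [hP, map_prod]
    exact Finset.prod_congr rfl fun i _ => by rw [map_prod]
  -- Laplace expansion along the last row
  set j0 : Fin (m + 2) := Fin.castSucc (Fin.last m) with hj0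
  have hsub : ∀ j : Fin (m + 2),
      V.submatrix (Fin.last (m+1)).succAbove j.succAbove =
        (C : R →+* R[X]).mapMatrix
          (Matrix.of fun i c : Fin (m+1) => x i ^ ((j.succAbove c : ℕ))) := by
    intro j
    ext i c
    simp [hV, hv, Matrix.vandermonde, Fin.succAbove_last, Fin.snoc_castSucc, map_pow]
  have hexp : V.det = ∑ j : Fin (m+2),
      C ((-1) ^ ((Fin.last (m+1) : ℕ) + (j : ℕ)) *
        Matrix.det (Matrix.of fun i c : Fin (m+1) => x i ^ ((j.succAbove c : ℕ)))) *
        X ^ (j : ℕ) := by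
    rw [Matrix.det_succ_row V (Fin.last (m+1))]
    refine Finset.sum_congr rfl fun j _ => ?_
    rw [hsub j, ← RingHom.map_det]
    have hVlast : V (Fin.last (m+1)) j = X ^ (j : ℕ) := by
      simp [hV, hv, Matrix.vandermonde, Fin.snoc_last]
    rw [hVlast, _root_.map_mul C, map_pow, map_neg, Polynomial.C_1]
    ring
  -- compare coefficients at degree m
  have hco1 : (V.det).coeff m = P * (-(∑ c : Fin (m+1), x c)) := by
    rw [hprod, Polynomial.coeff_C_mul]
    congr 1
    have h := Polynomial.prod_X_sub_C_coeff_card_pred (Finset.univ : Finset (Fin (m+1))) x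
      (by simp)
    simpa using h
  have hco2 : (V.det).coeff m =
      -(Matrix.det (Matrix.of fun i c : Fin (m+1) => x i ^ ((j0.succAbove c : ℕ)))) := by
    rw [hexp, Polynomial.finset_sum_coeff]
    rw [Finset.sum_eq_single j0]
    · have hj0v : (j0 : ℕ) = m := by simp [hj0]
      rw [Polynomial.coeff_C_mul, Polynomial.coeff_X_pow, hj0v, if_pos rfl, mul_one]
      simp only [Fin.val_last]
      rw [show ((-1 : R)) ^ (m + 1 + m) = -1 from Odd.neg_one_pow ⟨m, by ring⟩]
      ring
    · intro j _ hj
      have hjm : m ≠ (j : ℕ) := by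
        intro h
        exact hj (Fin.ext (by simp [hj0, ← h]))
      rw [Polynomial.coeff_C_mul, Polynomial.coeff_X_pow, if_neg hjm, mul_zero]
    · simp
  have hexpo : ∀ c : Fin (m+1), ((j0.succAbove c : ℕ)) =
      if (c : ℕ) = m then m + 1 else (c : ℕ) := by
    intro c
    rw [Fin.succAbove]
    split_ifs with h1 h2 h2
    · simp only [Fin.lt_def, hj0, Fin.coe_castSucc, Fin.val_last] at h1
      omega
    · rfl
    · simp [Fin.val_succ, h2]
    · simp only [Fin.lt_def, hj0, Fin.coe_castSucc, Fin.val_last] at h1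
      have := c.isLt
      simp only [Fin.val_succ]
      omega
  have hdetA : Matrix.det (Matrix.of fun i c : Fin (m+1) => x i ^ ((j0.succAbove c : ℕ))) =
      P * ∑ c : Fin (m+1), x c := by
    have h := hco1.symm.trans hco2
    linear_combination h
  rw [← Matrix.det_transpose]
  rw [show (Matrix.of fun r c : Fin (m+1) =>
      x c ^ (if (r : ℕ) = m + 1 - 1 then m + 1 else (r : ℕ)))ᵀ =
      Matrix.of fun i c : Fin (m+1) => x i ^ ((j0.succAbove c : ℕ)) from ?_]
  · exact hdetA
  · ext i c
    simp [Matrix.transpose_apply, hexpo c]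
end

section
/- Let R be a commutative ring, k ≥ 2, and let x_0,…,x_{k−1} be units of R. Define exponents m_0 = 0, m_r = r+1 for 1 ≤ r ≤ k−2, and m_{k−1} = k+1 (i.e., the exponent list is (0,2,3,…,k−1,k+1)). Then the determinant of the k×k matrix whose (r,c) entry is x_c^{m_r} equals (∏_{0 ≤ c < c' ≤ k−1} (x_{c'} − x_c)) · (∏_{c=0}^{k−1} x_c) · ((∑_{c=0}^{k−1} x_c)·(∑_{c=0}^{k−1} x_c^{−1}) − 1). -/
open Polynomial Finset Matrix

private lemma detRowSum {R : Type*} [CommRing R] {n : Type*} [DecidableEq n] [Fintype n]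
    (A : Matrix n n R) (i : n) {ι : Type*} [DecidableEq ι] (s : Finset ι) (g : ι → R) (u : ι → n → R) :
    (A.updateRow i (∑ j ∈ s, g j • u j)).det = ∑ j ∈ s, g j * (A.updateRow i (u j)).det := by
  induction s using Finset.induction_on with
  | empty =>
      simp only [Finset.sum_empty]
      exact Matrix.det_eq_zero_of_row_eq_zero i (fun j => by simp)
  | @insert a s h ih =>
      rw [Finset.sum_insert h, Matrix.det_updateRow_add, Matrix.det_updateRow_smul, ih,
        Finset.sum_insert h]

private lemma derivProd {R : Type*} [CommRing R] {ι : Type*} [DecidableEq ι]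
    (s : Finset ι) (f : ι → R[X]) :
    derivative (∏ i ∈ s, f i) = ∑ i ∈ s, (∏ j ∈ s.erase i, f j) * derivative (f i) := by
  induction s using Finset.induction_on with
  | empty => simp
  | @insert a s h ih =>
      rw [Finset.prod_insert h, derivative_mul, ih, Finset.sum_insert h,
        Finset.erase_insert h, Finset.mul_sum]
      congr 1
      · ring
      · refine Finset.sum_congr rfl fun i hi => ?_
        rw [Finset.erase_insert_of_ne (by rintro rfl; exact h hi),
          Finset.prod_insert (fun hmem => h (Finset.mem_of_mem_erase hmem))]
        ring

/-- Generalized Vandermonde determinant with exponent list `(0, 2, 3, …, k-1, k+1)`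
for units `x_0, …, x_{k-1}`:
`det (x_c^{m_r}) = (∏_{c < c'} (x_{c'} - x_c)) · (∏ x_c) · ((∑ x_c)·(∑ x_c⁻¹) - 1)`. -/
theorem det_vandermonde_skip_one_and_k {R : Type*} [CommRing R] {k : ℕ} (hk : 2 ≤ k)
    (x : Fin k → Rˣ) :
    Matrix.det (Matrix.of fun r c : Fin k =>
        ((x c : R) ^
          (if (r : ℕ) = 0 then 0 else if (r : ℕ) = k - 1 then k + 1 else (r : ℕ) + 1))) =
      (∏ c : Fin k, ∏ c' ∈ Finset.Ioi c, ((x c' : R) - (x c : R))) *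
        (∏ c : Fin k, (x c : R)) *
        ((∑ c : Fin k, (x c : R)) * (∑ c : Fin k, (((x c)⁻¹ : Rˣ) : R)) - 1) := by
  classical
  nontriviality R
  obtain ⟨m, rfl⟩ : ∃ m, k = m + 2 := ⟨k - 2, by omega⟩
  set v : Fin (m + 2) → R := fun c => (x c : R) with hv
  set e1 : R := ∑ c, v c with he1
  set einv : R := ∑ c : Fin (m + 2), (((x c)⁻¹ : Rˣ) : R) with heinv
  set Pv : R := ∏ c, v c with hPv
  set p : R[X] := ∏ i : Fin (m + 2), (X - C (v i)) with hp
  have hpm : p.Monic := monic_prod_of_monic _ _ fun i _ => monic_X_sub_C _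
  have hpd : p.natDegree = m + 2 := by
    rw [hp, natDegree_prod_of_monic _ _ fun i _ => monic_X_sub_C _]
    simp [natDegree_X_sub_C]
  set q : R[X] := X ^ (m + 3) - p * (X + C e1) with hq
  -- coefficient of the product
  have hmul : ∀ j : ℕ, (p * (X + C e1)).coeff j
      = (if j = 0 then 0 else p.coeff (j - 1)) + p.coeff j * e1 := by
    intro j
    rw [mul_add, coeff_add, coeff_mul_C]
    cases j with
    | zero => simp
    | succ i => simp [coeff_mul_X]
  have hptop : ∀ j, m + 2 < j → p.coeff j = 0 := fun j hj =>
    coeff_eq_zero_of_natDegree_lt (by omega)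
  have hpk : p.coeff (m + 2) = 1 := by
    have := hpm.coeff_natDegree
    rwa [hpd] at this
  have hpk1 : p.coeff (m + 1) = -e1 := by
    have h1 := nextCoeff_of_natDegree_pos (p := p) (by omega)
    have h2 : p.nextCoeff = -e1 := by
      rw [hp, prod_X_sub_C_nextCoeff, he1]
    rw [h1, hpd] at h2
    simpa using h2
  have hqtop : ∀ j, m + 2 ≤ j → q.coeff j = 0 := by
    intro j hj
    rw [hq, coeff_sub, coeff_X_pow, hmul]
    rcases Nat.lt_or_ge j (m + 3) with h | h
    · have hj' : j = m + 2 := by omega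
      subst hj'
      simp only [if_neg (by omega : ¬ m + 2 = m + 3), if_neg (by omega : ¬ m + 2 = 0)]
      have : m + 2 - 1 = m + 1 := by omega
      rw [this, hpk1, hpk]
      ring
    · rcases Nat.lt_or_ge (m + 3) j with h' | h'
      · rw [if_neg (by omega), if_neg (by omega), hptop _ (by omega), hptop _ (by omega)]
        ring
      · have hj' : j = m + 3 := by omega
        subst hj'
        rw [if_pos rfl, if_neg (by omega)]
        have : m + 3 - 1 = m + 2 := by omega
        rw [this, hpk, hptop _ (by omega)]
        ring
  have hqd : q.natDegree < m + 2 := by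
    by_cases h0 : q = 0
    · rw [h0]; simp
    · rw [natDegree_lt_iff_degree_lt h0, degree_lt_iff_coeff_zero]
      intro j hj
      exact hqtop j (by exact_mod_cast hj)
  -- evaluation identity
  have heval : ∀ c : Fin (m + 2),
      v c ^ (m + 3) = ∑ j ∈ Finset.range (m + 2), q.coeff j * v c ^ j := by
    intro c
    have hpz : p.eval (v c) = 0 := by
      rw [hp, eval_prod]
      exact Finset.prod_eq_zero (Finset.mem_univ c) (by simp)
    have hqe : q.eval (v c) = v c ^ (m + 3) := by
      rw [hq]
      simp [hpz]
    rw [← hqe, eval_eq_sum_range' hqd]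
  -- the matrix and key rows
  set A : Matrix (Fin (m + 2)) (Fin (m + 2)) R := Matrix.of fun r c : Fin (m + 2) =>
      ((x c : R) ^
        (if (r : ℕ) = 0 then 0 else if (r : ℕ) = m + 2 - 1 then m + 2 + 1 else (r : ℕ) + 1))
    with hA
  set W : Matrix (Fin (m + 2)) (Fin (m + 2)) R :=
      Matrix.of fun r c : Fin (m + 2) => v c ^ (r : ℕ) with hW
  set L : Fin (m + 2) := ⟨m + 1, by omega⟩ with hL
  have hAL : A L = ∑ j ∈ Finset.range (m + 2), q.coeff j • (fun c => v c ^ j) := by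
    funext c
    have : A L c = v c ^ (m + 3) := by
      show (x c : R) ^ _ = v c ^ (m + 3)
      norm_num [hL]
      rfl
    rw [this, heval c]
    simp
  have step1 : A.det = ∑ j ∈ Finset.range (m + 2),
      q.coeff j * (A.updateRow L (fun c => v c ^ j)).det := by
    conv_lhs => rw [← Matrix.updateRow_eq_self A L, hAL]
    exact detRowSum A L _ _ _
  have step2 : ∀ j ∈ Finset.range (m + 2), j ≠ 1 →
      q.coeff j * (A.updateRow L (fun c => v c ^ j)).det = 0 := by
    intro j hj hj1
    rw [Finset.mem_range] at hj
    set i : Fin (m + 2) := ⟨j - 1, by omega⟩ with hi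
    have hiL : i ≠ L := by
      simp only [hi, hL, Fin.mk.injEq, ne_eq]
      omega
    have hrow : (A.updateRow L (fun c => v c ^ j)) i
        = (A.updateRow L (fun c => v c ^ j)) L := by
      rw [Matrix.updateRow_ne hiL, Matrix.updateRow_self]
      funext c
      show (x c : R) ^ _ = v c ^ j
      have hval : (i : ℕ) = j - 1 := rfl
      rw [hval]
      congr 1
      split_ifs <;> omega
    exact mul_eq_zero_of_right _ (Matrix.det_zero_of_row_eq hiL hrow)
  have step3 : A.det = q.coeff 1 * (A.updateRow L (fun c => v c ^ 1)).det := by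
    rw [step1]
    exact Finset.sum_eq_single_of_mem 1 (Finset.mem_range.mpr (by omega)) step2
  -- the permuted Vandermonde
  set σ : Equiv.Perm (Fin (m + 2)) := Equiv.swap 0 1 * finRotate (m + 2) with hσ
  have h01 : (0 : Fin (m + 2)) ≠ 1 := by
    simp [Fin.ext_iff]
  have hσval : ∀ r : Fin (m + 2),
      ((σ r : Fin (m + 2)) : ℕ) = if (r : ℕ) = m + 1 then 1
        else if (r : ℕ) = 0 then 0 else (r : ℕ) + 1 := by
    intro r
    have hrot : (finRotate (m + 2)) r = r + 1 := finRotate_succ_apply r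
    have hval : ((r + 1 : Fin (m + 2)) : ℕ) = if r = Fin.last (m + 1) then 0 else (r : ℕ) + 1 :=
      Fin.val_add_one r
    have hσr : σ r = Equiv.swap 0 1 (r + 1) := by
      simp [hσ, hrot]
    rw [hσr, Equiv.swap_apply_def]
    by_cases hrl : r = Fin.last (m + 1)
    · have h10 : (r + 1 : Fin (m + 2)) = 0 := by
        ext
        rw [hval, if_pos hrl]
        simp
      rw [if_pos h10]
      have hrv : (r : ℕ) = m + 1 := by rw [hrl]; rfl
      rw [if_pos hrv]
      simp
    · have hne : ((r + 1 : Fin (m + 2)) : ℕ) = (r : ℕ) + 1 := by rw [hval, if_neg hrl]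
      have hrm : (r : ℕ) ≠ m + 1 := fun h => hrl (by ext; exact h)
      by_cases hr0 : (r : ℕ) = 0
      · have h1 : (r + 1 : Fin (m + 2)) = 1 := by
          ext
          rw [hne, hr0]
          rfl
        have hn0 : (r + 1 : Fin (m + 2)) ≠ 0 := by
          rw [h1]; exact h01.symm
        rw [if_neg hn0, if_pos h1]
        simp [hrm, hr0]
      · have hn0 : (r + 1 : Fin (m + 2)) ≠ 0 := by
          intro h
          rw [h] at hne
          simp at hne
        have hn1 : (r + 1 : Fin (m + 2)) ≠ 1 := by
          intro h
          rw [h] at hne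
          have : ((1 : Fin (m + 2)) : ℕ) = 1 := rfl
          omega
        rw [if_neg hn0, if_neg hn1, hne, if_neg hrm, if_neg hr0]
  have hBW : A.updateRow L (fun c => v c ^ 1) = W.submatrix σ id := by
    ext r c
    have hsub : (W.submatrix σ id) r c = v c ^ ((σ r : Fin (m + 2)) : ℕ) := rfl
    rw [hsub, hσval r]
    by_cases hrL : r = L
    · have hLv : (r : ℕ) = m + 1 := by rw [hrL]
      rw [hrL, Matrix.updateRow_self]
      have : (L : ℕ) = m + 1 := rfl
      simp [this]
    · rw [Matrix.updateRow_ne hrL]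
      show (x c : R) ^ _ = _
      have hrm : (r : ℕ) ≠ m + 1 := by
        intro h
        exact hrL (by ext; exact h)
      congr 1
      split_ifs <;> omega
  have hsign : ((Equiv.Perm.sign σ : ℤ) : R) = (-1 : R) ^ (m + 2) := by
    rw [hσ, Equiv.Perm.sign_mul, Equiv.Perm.sign_swap h01, sign_finRotate]
    push_cast
    ring
  have hWdet : W.det = ∏ c : Fin (m + 2), ∏ c' ∈ Finset.Ioi c, (v c' - v c) := by
    have : W = (Matrix.vandermonde v)ᵀ := by
      ext r c
      simp [hW, Matrix.vandermonde]
    rw [this, Matrix.det_transpose, Matrix.det_vandermonde]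
  have hBdet : (A.updateRow L (fun c => v c ^ 1)).det
      = (-1 : R) ^ (m + 2) * ∏ c : Fin (m + 2), ∏ c' ∈ Finset.Ioi c, (v c' - v c) := by
    rw [hBW, Matrix.det_permute, hWdet, ← hsign]
  -- the coefficient values
  have hq1 : q.coeff 1 = -(p.coeff 0) - p.coeff 1 * e1 := by
    rw [hq, coeff_sub, coeff_X_pow, hmul]
    norm_num
    ring
  have hp0 : p.coeff 0 = (-1 : R) ^ (m + 2) * Pv := by
    rw [coeff_zero_eq_eval_zero, hp, eval_prod]
    have : ∀ i ∈ (Finset.univ : Finset (Fin (m + 2))), (X - C (v i)).eval 0 = -1 * v i := by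
      intro i _
      simp
    rw [Finset.prod_congr rfl this, Finset.prod_mul_distrib, Finset.prod_const, Finset.card_univ,
      Fintype.card_fin, hPv]
  have herase : ∀ c : Fin (m + 2),
      ∏ i ∈ Finset.univ.erase c, v i = (((x c)⁻¹ : Rˣ) : R) * Pv := by
    intro c
    have h1 : v c * ∏ i ∈ Finset.univ.erase c, v i = Pv :=
      Finset.mul_prod_erase Finset.univ v (Finset.mem_univ c)
    calc ∏ i ∈ Finset.univ.erase c, v i
        = ((((x c)⁻¹ : Rˣ) : R) * v c) * ∏ i ∈ Finset.univ.erase c, v i := by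
          rw [Units.inv_mul, one_mul]
      _ = (((x c)⁻¹ : Rˣ) : R) * Pv := by rw [mul_assoc, h1]
  have hp1 : p.coeff 1 = (-1 : R) ^ (m + 1) * (Pv * einv) := by
    have hd : p.coeff 1 = (derivative p).coeff 0 := by
      rw [coeff_derivative]
      norm_num
    rw [hd, coeff_zero_eq_eval_zero, hp, derivProd, eval_finset_sum]
    have hterm : ∀ c ∈ (Finset.univ : Finset (Fin (m + 2))),
        ((∏ j ∈ Finset.univ.erase c, (X - C (v j))) * derivative (X - C (v c))).eval 0
          = (-1 : R) ^ (m + 1) * Pv * (((x c)⁻¹ : Rˣ) : R) := by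
      intro c _
      rw [derivative_X_sub_C, mul_one, eval_prod]
      have : ∀ i ∈ Finset.univ.erase c, (X - C (v i)).eval 0 = -1 * v i := by
        intro i _
        simp
      rw [Finset.prod_congr rfl this, Finset.prod_mul_distrib, Finset.prod_const,
        Finset.card_erase_of_mem (Finset.mem_univ c), Finset.card_univ, Fintype.card_fin,
        herase c]
      rw [show m + 2 - 1 = m + 1 from by omega, pow_succ]
      ring
    rw [Finset.sum_congr rfl hterm, ← Finset.mul_sum, ← heinv]
    ring
  -- final assembly
  have ht : (-1 : R) ^ (m + 1) = -(-1 : R) ^ (m + 2) := by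
    rw [pow_succ]
    ring
  have hs2 : (-1 : R) ^ (m + 2) * (-1 : R) ^ (m + 2) = 1 := by
    rw [← pow_add]
    exact Even.neg_one_pow ⟨m + 2, by ring⟩
  simp only [hv] at hBdet
  rw [step3, hBdet, hq1, hp0, hp1, ht]
  linear_combination ((∏ c : Fin (m + 2), ∏ c' ∈ Finset.Ioi c, ((x c' : R) - (x c : R))) *
    Pv * (e1 * einv - 1)) * hs2
end

section
/- Let p be a prime, F a field of characteristic p, k ≥ 1, and x = (x_0,…,x_{k−1}) ∈ F^k. Then the determinant of the k×k Moore matrix whose (r,c) entry is x_c^{p^r} is nonzero if and only if the family (x_0,…,x_{k−1}) is linearly independent over ℤ/pℤ (with ℤ/pℤ acting on F via its 𝔽_p-algebra structure). -/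
/-- Over a field `F` of characteristic `p`, the Moore matrix `(x_c^{p^r})` of a
`k`-tuple `x` has nonzero determinant iff the family `x` is linearly independent
over `ℤ/pℤ` (acting on `F` via its `𝔽_p`-algebra structure). -/
theorem moore_det_ne_zero_iff_linearIndependent (p : ℕ) (hp : p.Prime) {F : Type*}
    [Field F] [CharP F p] {k : ℕ} (hk : 1 ≤ k) (x : Fin k → F) :
    letI : Algebra (ZMod p) F := ZMod.algebra F p
    (Matrix.det (Matrix.of fun r c : Fin k => x c ^ p ^ (r : ℕ)) ≠ 0 ↔
      LinearIndependent (ZMod p) x) := by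
  classical
  letI : Algebra (ZMod p) F := ZMod.algebra F p
  haveI : Fact p.Prime := ⟨hp⟩
  have hsmul : ∀ (c : ZMod p) (y : F) (r : ℕ), (c • y) ^ p ^ r = c • y ^ p ^ r := by
    intro c y r
    rw [Algebra.smul_def, Algebra.smul_def, mul_pow, ← map_pow, ZMod.pow_card_pow]
  set M : Matrix (Fin k) (Fin k) F :=
    Matrix.of fun r c : Fin k => x c ^ p ^ (r : ℕ) with hM
  constructor
  · -- det ≠ 0 → linear independent
    intro hdet
    rw [Fintype.linearIndependent_iff]
    intro g hg
    by_contra hgne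
    push_neg at hgne
    obtain ⟨i, hi⟩ := hgne
    apply hdet
    rw [← Matrix.exists_mulVec_eq_zero_iff]
    refine ⟨fun c => algebraMap (ZMod p) F (g c), ?_, ?_⟩
    · intro h
      exact hi (by simpa using congrFun h i)
    · funext r
      have : (∑ c, g c • x c) ^ p ^ (r : ℕ) = 0 := by rw [hg]; exact zero_pow (pow_ne_zero _ hp.pos.ne')
      rw [sum_pow_char_pow] at this
      simp only [Matrix.mulVec, dotProduct, hM, Matrix.of_apply,
        Pi.zero_apply]
      rw [← this]
      refine Finset.sum_congr rfl fun c _ => ?_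
      rw [hsmul, Algebra.smul_def, mul_comm]
  · -- linear independent → det ≠ 0
    intro hli hdet
    rw [← Matrix.exists_vecMul_eq_zero_iff] at hdet
    obtain ⟨a, ha, hva⟩ := hdet
    -- the additive polynomial L(X) = ∑ a r * X^(p^r)
    set L : Polynomial F := ∑ r : Fin k, Polynomial.C (a r) * Polynomial.X ^ p ^ (r : ℕ)
      with hL
    have hroot : ∀ c : Fin k → ZMod p, L.eval (∑ i, c i • x i) = 0 := by
      intro c
      have hLeval : ∀ y : F, L.eval y = ∑ r : Fin k, a r * y ^ p ^ (r : ℕ) := by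
        intro y; simp [hL, Polynomial.eval_finset_sum]
      rw [hLeval]
      have key : ∀ i, ∑ r : Fin k, a r * x i ^ p ^ (r : ℕ) = 0 := by
        intro i
        have := congrFun hva i
        simpa [Matrix.vecMul, dotProduct, hM] using this
      calc ∑ r : Fin k, a r * (∑ i, c i • x i) ^ p ^ (r : ℕ)
          = ∑ r : Fin k, ∑ i, c i • (a r * x i ^ p ^ (r : ℕ)) := by
            refine Finset.sum_congr rfl fun r _ => ?_
            rw [sum_pow_char_pow, Finset.mul_sum]
            refine Finset.sum_congr rfl fun i _ => ?_
            rw [hsmul, mul_smul_comm]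
        _ = ∑ i, c i • ∑ r : Fin k, a r * x i ^ p ^ (r : ℕ) := by
            rw [Finset.sum_comm]
            exact Finset.sum_congr rfl fun i _ => (Finset.smul_sum).symm
        _ = 0 := by simp [key]
    have hLne : L ≠ 0 := by
      obtain ⟨r, hr⟩ : ∃ r, a r ≠ 0 := by
        by_contra h; push_neg at h; exact ha (funext h)
      intro h
      apply hr
      have := congrArg (Polynomial.coeff · (p ^ (r : ℕ))) h
      simp only [hL, Polynomial.finset_sum_coeff, Polynomial.coeff_C_mul,
        Polynomial.coeff_X_pow, Polynomial.coeff_zero] at this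
      rw [Finset.sum_eq_single r] at this
      · simpa using this
      · intro b _ hb
        have hne : p ^ (r : ℕ) ≠ p ^ (b : ℕ) := fun hpe =>
          hb (Fin.ext (Nat.pow_right_injective hp.two_le hpe.symm))
        simp [hne]
      · simp
    -- degree bound
    have hdeg : L.natDegree ≤ p ^ (k - 1) := by
      refine Polynomial.natDegree_sum_le_of_forall_le _ _ fun r _ => ?_
      refine le_trans (Polynomial.natDegree_C_mul_le _ _) ?_
      rw [Polynomial.natDegree_X_pow]
      exact Nat.pow_le_pow_right hp.pos (Nat.le_sub_one_of_lt r.2)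
    -- too many roots
    have hinj : Function.Injective fun c : Fin k → ZMod p => ∑ i, c i • x i := by
      intro c c' hcc
      dsimp only at hcc
      have h0 : ∑ i, (c - c') i • x i = 0 := by
        simp only [Pi.sub_apply, sub_smul, Finset.sum_sub_distrib]
        rw [hcc]; simp
      have h1 := Fintype.linearIndependent_iff.mp hli _ h0
      funext i
      have h2 := h1 i
      rwa [Pi.sub_apply, sub_eq_zero] at h2
    have hcard : Fintype.card (Fin k → ZMod p) ≤ L.roots.toFinset.card := by
      have : ∀ c : Fin k → ZMod p, (∑ i, c i • x i) ∈ L.roots.toFinset := by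
        intro c
        rw [Multiset.mem_toFinset, Polynomial.mem_roots']
        exact ⟨hLne, hroot c⟩
      calc Fintype.card (Fin k → ZMod p)
          = (Finset.univ.image fun c : Fin k → ZMod p => ∑ i, c i • x i).card := by
            rw [Finset.card_image_of_injective _ hinj, Finset.card_univ]
        _ ≤ L.roots.toFinset.card := by
            apply Finset.card_le_card
            intro y hy
            obtain ⟨c, _, rfl⟩ := Finset.mem_image.mp hy
            exact this c
    have hcard2 : L.roots.toFinset.card ≤ p ^ (k - 1) :=
      le_trans (Multiset.toFinset_card_le _) (le_trans (Polynomial.card_roots' L) hdeg)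
    rw [Fintype.card_fun] at hcard
    simp only [ZMod.card, Fintype.card_fin] at hcard
    have : p ^ k ≤ p ^ (k - 1) := le_trans hcard hcard2
    have := Nat.pow_lt_pow_right hp.one_lt (Nat.sub_lt hk Nat.one_pos)
    omega
end

section
/- Let p be a prime, R a commutative ring of characteristic p, k ≥ 1, and h = (h_0,…,h_{k−1}) ∈ R^k. Then the determinant of the k×k matrix whose (i,j) entry is h_i^{p^j} (rows indexed by i, columns by j, 0 ≤ i,j ≤ k−1) equals ∏_{j=0}^{k−1} ∏_{(c_0,…,c_{j−1}) ∈ (ℤ/pℤ)^j} (h_j − ∑_{i=0}^{j−1} c_i · h_i), where the factor for j = 0 is h_0 (the inner product over the empty tuple), and c_i · h_i denotes the scalar action of ℤ/pℤ on R. -/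
open Polynomial Matrix Finset

theorem moore_det_aux (p : ℕ) [hpf : Fact p.Prime] : ∀ (k : ℕ) {R : Type*} [CommRing R] [IsDomain R]
    [CharP R p] (h : Fin k → R),
    (∀ c : Fin k → ZMod p,
      (∑ i, ZMod.castHom (dvd_refl p) R (c i) * h i) = 0 → c = 0) →
    Matrix.det (Matrix.of fun i j : Fin k => h i ^ p ^ (j : ℕ)) =
      ∏ j : Fin k, ∏ c : Fin (j : ℕ) → ZMod p,
        (h j - ∑ i : Fin (j : ℕ),
          ZMod.castHom (dvd_refl p) R (c i) * h (Fin.castLE j.isLt.le i)) := by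
  have hp := hpf.out
  intro k
  induction k with
  | zero => intro R _ _ _ h _; simp
  | succ k IH =>
    intro R _ _ _ h hind
    set φ : ZMod p →+* R := ZMod.castHom (dvd_refl p) R with hφ
    set hR : Fin k → R := fun i => h i.castSucc with hhR
    -- restricted independence
    have hindR : ∀ c : Fin k → ZMod p, (∑ i, φ (c i) * hR i) = 0 → c = 0 := by
      intro c hc
      have h2 := hind (Fin.snoc c 0) ?_
      · funext i
        have := congrFun h2 i.castSucc
        simpa [Fin.snoc_castSucc] using this
      · rw [Fin.sum_univ_castSucc]
        simpa [Fin.snoc_castSucc, Fin.snoc_last] using hc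
    have IHk := IH hR hindR
    set P : R := ∏ j : Fin k, ∏ c : Fin (j : ℕ) → ZMod p,
        (hR j - ∑ i : Fin (j : ℕ), φ (c i) * hR (Fin.castLE j.isLt.le i)) with hP
    set r : (Fin k → ZMod p) → R := fun c => ∑ i, φ (c i) * h i.castSucc with hr
    have hrinj : Function.Injective r := by
      intro c c' hcc
      have h2 : (∑ i, φ ((c - c') i) * hR i) = 0 := by
        simp only [Pi.sub_apply, map_sub, sub_mul, Finset.sum_sub_distrib]
        rw [hr] at hcc
        simp only [hhR]
        rw [sub_eq_zero]
        exact hcc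
      have := hindR _ h2
      exact sub_eq_zero.mp (by funext i; exact congrFun this i)
    -- the polynomial matrix
    set N : Matrix (Fin (k+1)) (Fin (k+1)) R[X] := Matrix.of fun i j =>
      if i = Fin.last k then (X : R[X]) ^ p ^ (j : ℕ) else C (h i ^ p ^ (j : ℕ)) with hN
    set Mx : R → Matrix (Fin (k+1)) (Fin (k+1)) R := fun x =>
      Matrix.of fun i j => (if i = Fin.last k then x else h i) ^ p ^ (j : ℕ) with hMx
    have heval : ∀ x : R, (N.det).eval x = (Mx x).det := by
      intro x
      rw [← coe_evalRingHom, RingHom.map_det]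
      congr 1
      ext i j
      simp only [RingHom.mapMatrix_apply, Matrix.map_apply, hN, hMx, Matrix.of_apply,
        coe_evalRingHom]
      split <;> simp
    have hMfull : Mx (h (Fin.last k)) = Matrix.of fun i j : Fin (k+1) => h i ^ p ^ (j : ℕ) := by
      ext i j
      simp only [hMx, Matrix.of_apply]
      split_ifs with hi
      · rw [hi]
      · rfl
    -- roots
    have hroot : ∀ c : Fin k → ZMod p, (Mx (r c)).det = 0 := by
      intro c
      set A := Mx (h (Fin.last k)) with hA
      set d : Fin (k+1) → R := Fin.snoc (fun i => φ (c i)) 0 with hd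
      have hupd : Mx (r c) = A.updateRow (Fin.last k) (∑ i, d i • A i) := by
        ext i j
        rw [Matrix.updateRow_apply]
        split_ifs with hi
        · subst hi
          simp only [hMx, Matrix.of_apply, if_true, ite_true, eq_self_iff_true,
            Finset.sum_apply, Pi.smul_apply, smul_eq_mul, hr]
          rw [sum_pow_char_pow]
          rw [Fin.sum_univ_castSucc]
          have hlast : d (Fin.last k) = 0 := by simp [hd]
          rw [hlast, zero_mul, add_zero]
          refine Finset.sum_congr rfl fun i _ => ?_
          have hdi : d i.castSucc = φ (c i) := by simp [hd]
          rw [hdi, mul_pow]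
          have hφpow : φ (c i) ^ p ^ (j : ℕ) = φ (c i) := by
            rw [← map_pow, ZMod.pow_card_pow]
          rw [hφpow]
          simp only [hA, hMx, Matrix.of_apply]
          rw [if_neg (Fin.castSucc_lt_last i).ne]
        · simp only [hMx, hA, Matrix.of_apply, if_neg hi]
      rw [hupd, Matrix.det_updateRow_sum]
      simp [hd]
    -- Laplace expansion along the last row
    set m : Fin (k+1) → R := fun j => (Matrix.of fun a b : Fin k =>
        h a.castSucc ^ p ^ ((j.succAbove b : ℕ))).det with hm
    have hmlast : m (Fin.last k) = P := by
      rw [hm, ← IHk]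
      simp [Fin.succAbove_last, Fin.coe_castSucc]
      rfl
    have hdet : N.det = ∑ j : Fin (k+1), C ((-1) ^ ((k : ℕ) + (j : ℕ)) * m j) * X ^ p ^ (j : ℕ) := by
      rw [Matrix.det_succ_row N (Fin.last k)]
      refine Finset.sum_congr rfl fun j _ => ?_
      have h1 : N (Fin.last k) j = (X : R[X]) ^ p ^ (j : ℕ) := by simp [hN]
      have h2 : (N.submatrix (Fin.last k).succAbove j.succAbove).det = C (m j) := by
        have hsub : N.submatrix (Fin.last k).succAbove j.succAbove
            = (C : R →+* R[X]).mapMatrix (Matrix.of fun a b : Fin k =>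
                h a.castSucc ^ p ^ ((j.succAbove b : ℕ))) := by
          ext a b
          simp [hN, Fin.succAbove_last, (Fin.castSucc_lt_last a).ne,
            RingHom.mapMatrix_apply, Matrix.map_apply]
        rw [hsub, ← RingHom.map_det, hm]
      rw [h1, h2, Fin.val_last]
      simp only [C_mul, C_pow, C_neg, C_1]
      ring
    set Q : R[X] := ∏ c : Fin k → ZMod p, (X - C (r c)) with hQdef
    have hQmonic : Q.Monic := monic_prod_of_monic _ _ fun c _ => monic_X_sub_C _
    have hcard : Fintype.card (Fin k → ZMod p) = p ^ k := by
      simp [ZMod.card]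
    have hQdeg : Q.natDegree = p ^ k := by
      rw [hQdef, natDegree_prod_of_monic _ _ fun c _ => monic_X_sub_C _]
      simp [natDegree_X_sub_C, hcard]
    have hdegQlt : degree ((X : R[X]) ^ p ^ k - Q) < ((p ^ k : ℕ) : WithBot ℕ) := by
      have h1 : degree ((X : R[X]) ^ p ^ k) = ((p ^ k : ℕ) : WithBot ℕ) := degree_X_pow _
      rw [← h1]
      refine degree_sub_lt ?_ (pow_ne_zero _ X_ne_zero) ?_
      · rw [h1, degree_eq_natDegree hQmonic.ne_zero, hQdeg]
      · rw [leadingCoeff_X_pow, hQmonic.leadingCoeff]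
    have hd1 : degree (N.det - C P * X ^ p ^ k) < ((p ^ k : ℕ) : WithBot ℕ) := by
      rw [hdet, Fin.sum_univ_castSucc]
      have hlastterm : C ((-1) ^ ((k : ℕ) + ((Fin.last k : ℕ))) * m (Fin.last k))
          * (X : R[X]) ^ p ^ ((Fin.last k : ℕ)) = C P * X ^ p ^ k := by
        rw [Fin.val_last, hmlast, Even.neg_one_pow (Even.add_self k), one_mul]
      rw [hlastterm, add_sub_cancel_right]
      refine lt_of_le_of_lt (degree_sum_le _ _) ?_
      rw [Finset.sup_lt_iff
        (by exact_mod_cast WithBot.bot_lt_coe (p ^ k) : (⊥ : WithBot ℕ) < ((p ^ k : ℕ) : WithBot ℕ))]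
      intro j _
      refine lt_of_le_of_lt (degree_mul_le _ _) ?_
      have hb : degree ((X : R[X]) ^ p ^ ((j.castSucc : ℕ))) = ((p ^ (j : ℕ) : ℕ) : WithBot ℕ) := by
        rw [degree_X_pow, Fin.coe_castSucc]
      calc degree (C ((-1) ^ ((k : ℕ) + ((j.castSucc : ℕ))) * m j.castSucc))
            + degree ((X : R[X]) ^ p ^ ((j.castSucc : ℕ)))
          ≤ 0 + ((p ^ (j : ℕ) : ℕ) : WithBot ℕ) := add_le_add degree_C_le (le_of_eq hb)
        _ = ((p ^ (j : ℕ) : ℕ) : WithBot ℕ) := zero_add _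
        _ < ((p ^ k : ℕ) : WithBot ℕ) := by
            exact_mod_cast Nat.pow_lt_pow_right hp.one_lt j.isLt
    have hd2 : degree (C P * ((X : R[X]) ^ p ^ k - Q)) < ((p ^ k : ℕ) : WithBot ℕ) := by
      refine lt_of_le_of_lt (degree_mul_le _ _) ?_
      calc degree (C P) + degree ((X : R[X]) ^ p ^ k - Q)
          ≤ 0 + degree ((X : R[X]) ^ p ^ k - Q) := add_le_add degree_C_le le_rfl
        _ = degree ((X : R[X]) ^ p ^ k - Q) := zero_add _
        _ < ((p ^ k : ℕ) : WithBot ℕ) := hdegQlt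
    have hElt : degree (N.det - C P * Q) < ((p ^ k : ℕ) : WithBot ℕ) := by
      have hE : N.det - C P * Q = (N.det - C P * X ^ p ^ k)
          + C P * ((X : R[X]) ^ p ^ k - Q) := by ring
      rw [hE]
      exact lt_of_le_of_lt (degree_add_le _ _) (max_lt hd1 hd2)
    have hEzero : N.det - C P * Q = 0 := by
      refine Polynomial.eq_zero_of_natDegree_lt_card_of_eval_eq_zero _ hrinj ?_ ?_
      · intro c
        rw [eval_sub, heval, hroot, eval_mul, eval_C, hQdef, eval_prod]
        rw [Finset.prod_eq_zero (Finset.mem_univ c) (by simp)]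
        ring
      · rw [hcard]
        rcases eq_or_ne (N.det - C P * Q) 0 with h0 | h0
        · rw [h0]
          simpa using pow_pos hp.pos k
        · exact (natDegree_lt_iff_degree_lt h0).mpr hElt
    have hDQ : N.det = C P * Q := sub_eq_zero.mp hEzero
    -- evaluate at h (last)
    have hfinal := heval (h (Fin.last k))
    rw [hDQ, hMfull] at hfinal
    rw [← hfinal, eval_mul, eval_C, hQdef, eval_prod]
    simp only [eval_sub, eval_X, eval_C]
    rw [Fin.prod_univ_castSucc]
    congr 1

/-- Determinant of the linearized (Moore-type) matrix `U(h) = (h_i^{p^j})` over a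
commutative ring `R` of characteristic `p`:
`det U(h) = ∏_{j=0}^{k-1} ∏_{(c_0,…,c_{j-1}) ∈ (ℤ/pℤ)^j} (h_j - ∑_{i<j} c_i · h_i)`,
the factor for `j = 0` being `h_0`. -/
theorem det_linearized_matrix (p : ℕ) (hp : p.Prime) {R : Type*} [CommRing R]
    [CharP R p] {k : ℕ} (hk : 1 ≤ k) (h : Fin k → R) :
    letI : NeZero p := ⟨hp.ne_zero⟩
    Matrix.det (Matrix.of fun i j : Fin k => h i ^ p ^ (j : ℕ)) =
      ∏ j : Fin k, ∏ c : Fin (j : ℕ) → ZMod p,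
        (h j - ∑ i : Fin (j : ℕ),
          ZMod.castHom (dvd_refl p) R (c i) * h (Fin.castLE j.isLt.le i)) := by
  haveI : Fact p.Prime := ⟨hp⟩
  set A := MvPolynomial (Fin k) (ZMod p) with hA
  have key := moore_det_aux p k (R := A) (fun i => MvPolynomial.X i) ?hind
  case hind =>
    intro c hc
    funext i
    have h2 := congrArg (MvPolynomial.eval (Pi.single i (1 : ZMod p))) hc
    have hcast : ∀ x : ZMod p, MvPolynomial.eval (Pi.single i (1 : ZMod p))
        (ZMod.castHom (dvd_refl p) A x) = x := fun x =>
      DFunLike.congr_fun (RingHom.ext_zmod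
        (((MvPolynomial.eval (Pi.single i (1 : ZMod p)) : A →+* ZMod p)).comp
          (ZMod.castHom (dvd_refl p) A)) (RingHom.id _)) x
    simp only [map_sum, _root_.map_mul, MvPolynomial.eval_X, map_zero, hcast] at h2
    simpa [Pi.single_apply, mul_ite, Finset.sum_ite_eq'] using h2
  set f : A →+* R := MvPolynomial.eval₂Hom (ZMod.castHom (dvd_refl p) R) h with hf
  have hfX : ∀ i, f (MvPolynomial.X i) = h i := fun i => MvPolynomial.eval₂Hom_X' _ _ _
  have hcomp : ∀ x : ZMod p, f (ZMod.castHom (dvd_refl p) A x) = ZMod.castHom (dvd_refl p) R x :=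
    fun x => DFunLike.congr_fun (RingHom.ext_zmod (f.comp (ZMod.castHom (dvd_refl p) A))
      (ZMod.castHom (dvd_refl p) R)) x
  calc Matrix.det (Matrix.of fun i j : Fin k => h i ^ p ^ (j : ℕ))
      = f (Matrix.det (Matrix.of fun i j : Fin k => MvPolynomial.X i ^ p ^ (j : ℕ))) := by
        rw [RingHom.map_det]
        congr 1
        ext i j
        simp [RingHom.mapMatrix_apply, Matrix.map_apply, map_pow, hfX]
    _ = f (∏ j : Fin k, ∏ c : Fin (j : ℕ) → ZMod p,
          (MvPolynomial.X j - ∑ i : Fin (j : ℕ),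
            ZMod.castHom (dvd_refl p) A (c i) * MvPolynomial.X (Fin.castLE j.isLt.le i))) := by
        rw [key]
    _ = _ := by
        rw [map_prod]
        refine Finset.prod_congr rfl fun j _ => ?_
        rw [map_prod]
        refine Finset.prod_congr rfl fun c _ => ?_
        rw [map_sub, map_sum, hfX]
        congr 1
        refine Finset.sum_congr rfl fun i _ => ?_
        rw [_root_.map_mul, hcomp, hfX]
end
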